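/- arXiv:2401.05233 — 4 statements merged into one kernel-verified Lean document; each statement's English description precedes it below -/
import Mathlib

section
/- Telescope inequality: For any tuple f̂ = (f̂_1, …, f̂_H) of bounded measurable functions on S × A with f̂_H = r_H, any greedy policy π̂ of f̂, and any policy π, J(π) − J(π̂) ≤ ∑_{h=1}^{H−1} ( E_π[(T_h^* f̂_{h+1} − f̂_h)(S_h, A_h)] − E_{π̂}[(T_h^* f̂_{h+1} − f̂_h)(S_h, A_h)] ). -/
open MeasureTheory ProbabilityTheory

noncomputable section

namespace RLStability
set_option linter.unusedSectionVars false

variable {S A : Type*} [MeasurableSpace S] [MeasurableSpace A] [Nonempty A]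

/-- Auxiliary occupation-measure sequence: `occAux ξ P π n` is the joint law of
`(S_{n+1}, A_{n+1})` under initial distribution `ξ` and policy `π`. -/
def occAux (ξ : Measure S) (P : ℕ → Kernel (S × A) S) (π : ℕ → S → A) :
    ℕ → Measure (S × A)
  | 0 => ξ.map fun s => (s, π 1 s)
  | n + 1 =>
      (occAux ξ P π n).bind fun sa => ((P (n + 1)) sa).map fun s' => (s', π (n + 2) s')

/-- Occupation measure of `(S_h, A_h)` under policy `π`, for stages `h ≥ 1`. -/
def occ (ξ : Measure S) (P : ℕ → Kernel (S × A) S) (π : ℕ → S → A) (h : ℕ) :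
    Measure (S × A) :=
  occAux ξ P π (h - 1)

/-- `E_π[g(S_h, A_h)]`. -/
def Epol (ξ : Measure S) (P : ℕ → Kernel (S × A) S) (π : ℕ → S → A) (h : ℕ)
    (g : S × A → ℝ) : ℝ :=
  ∫ sa, g sa ∂(occ ξ P π h)

/-- Expected return `J(π)` over horizon `H`. -/
def expReturn (ξ : Measure S) (P : ℕ → Kernel (S × A) S) (r : ℕ → S × A → ℝ)
    (H : ℕ) (π : ℕ → S → A) : ℝ :=
  ∑ h ∈ Finset.Icc 1 H, Epol ξ P π h (r h)

/-- One-step transition operator `P_h^π`. -/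
def Ppol (P : ℕ → Kernel (S × A) S) (π : ℕ → S → A) (h : ℕ) (f : S × A → ℝ) :
    S × A → ℝ :=
  fun sa => ∫ s', f (s', π (h + 1) s') ∂((P h) sa)

/-- `PmultiAux P π k h g` applies `k` steps of the transition operators starting at stage `h`. -/
def PmultiAux (P : ℕ → Kernel (S × A) S) (π : ℕ → S → A) :
    ℕ → ℕ → (S × A → ℝ) → S × A → ℝ
  | 0, _, g => g
  | k + 1, h, g => Ppol P π h (PmultiAux P π k (h + 1) g)

/-- Multi-step transition operator `P^π_{h → h'} = P_h^π ⋯ P_{h'-1}^π`. -/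
def Pmulti (P : ℕ → Kernel (S × A) S) (π : ℕ → S → A) (h h' : ℕ)
    (g : S × A → ℝ) : S × A → ℝ :=
  PmultiAux P π (h' - h) h g

/-- Bellman optimality operator `T_h^*`. -/
def Tstar (P : ℕ → Kernel (S × A) S) (r : ℕ → S × A → ℝ) (h : ℕ)
    (f : S × A → ℝ) : S × A → ℝ :=
  fun sa => r h sa + ∫ s', (⨆ a' : A, f (s', a')) ∂((P h) sa)

def qstarAux (P : ℕ → Kernel (S × A) S) (r : ℕ → S × A → ℝ) (H : ℕ) :
    ℕ → S × A → ℝ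
  | 0 => r H
  | k + 1 => Tstar P r (H - (k + 1)) (qstarAux P r H k)

/-- Optimal Q-function at stage `h`: `q*_H = r_H`, `q*_h = T_h^* q*_{h+1}`. -/
def qstar (P : ℕ → Kernel (S × A) S) (r : ℕ → S × A → ℝ) (H h : ℕ) :
    S × A → ℝ :=
  qstarAux P r H (H - h)

/-- `π` is greedy with respect to the tuple of Q-functions `f = (f_1, …, f_H)`. -/
def IsGreedy (H : ℕ) (f : ℕ → S × A → ℝ) (π : ℕ → S → A) : Prop :=
  ∀ h ∈ Finset.Icc 1 H, ∀ s : S, f h (s, π h s) = ⨆ a : A, f h (s, a)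

/-- Occupation-measure norm `‖f‖_h` (with respect to the policy `πs`). -/
def onorm (ξ : Measure S) (P : ℕ → Kernel (S × A) S) (πs : ℕ → S → A) (h : ℕ)
    (f : S × A → ℝ) : ℝ :=
  Real.sqrt (∫ sa, f sa ^ 2 ∂(occ ξ P πs h))

/-- Bounded measurable real functions on the state–action space. -/
def BddMeas (f : S × A → ℝ) : Prop :=
  Measurable f ∧ ∃ C : ℝ, ∀ x, |f x| ≤ C

/-- The Minkowski difference class `∂F = F - F`. -/
def diffSet (F : Set (S × A → ℝ)) : Set (S × A → ℝ) :=
  {g | ∃ f₁ ∈ F, ∃ f₂ ∈ F, g = f₁ - f₂}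

/-! ### Auxiliary lemmas -/

section Helpers

variable {α β : Type*} [MeasurableSpace α] [MeasurableSpace β]

lemma integrable_of_bdd {μ : Measure α} [IsFiniteMeasure μ] {f : α → ℝ}
    (hf : Measurable f) {C : ℝ} (hC : ∀ x, |f x| ≤ C) : Integrable f μ :=
  ⟨hf.aestronglyMeasurable,
    MeasureTheory.HasFiniteIntegral.of_bounded (C := C) (Filter.Eventually.of_forall fun x => by
      simpa [Real.norm_eq_abs] using hC x)⟩

lemma bind_kernel_eq_map_snd (μ : Measure α) [SFinite μ] (κ : ProbabilityTheory.Kernel α β)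
    [ProbabilityTheory.IsSFiniteKernel κ] :
    (μ.bind fun a => κ a) = (μ ⊗ₘ κ).map Prod.snd := by
  ext s hs
  rw [Measure.bind_apply hs (κ.measurable.aemeasurable), Measure.map_apply measurable_snd hs,
    Measure.compProd_apply (measurable_snd hs)]
  rfl

lemma isProbabilityMeasure_bind_kernel (μ : Measure α) [IsProbabilityMeasure μ]
    (κ : ProbabilityTheory.Kernel α β) [ProbabilityTheory.IsMarkovKernel κ] :
    IsProbabilityMeasure (μ.bind fun a => κ a) := by
  rw [bind_kernel_eq_map_snd]
  exact Measure.isProbabilityMeasure_map measurable_snd.aemeasurable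

lemma integral_bind_kernel (μ : Measure α) [IsProbabilityMeasure μ]
    (κ : ProbabilityTheory.Kernel α β) [ProbabilityTheory.IsMarkovKernel κ]
    {f : β → ℝ} (hf : Measurable f) {C : ℝ} (hC : ∀ x, |f x| ≤ C) :
    ∫ x, f x ∂(μ.bind fun a => κ a) = ∫ a, ∫ x, f x ∂(κ a) ∂μ := by
  rw [bind_kernel_eq_map_snd,
    integral_map measurable_snd.aemeasurable hf.aestronglyMeasurable,
    Measure.integral_compProd (integrable_of_bdd (f := fun x : α × β => f x.2)
      (hf.comp measurable_snd) (C := C) (fun x => hC x.2))]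

end Helpers

section MDPHelpers

variable (ξ : Measure S) [IsProbabilityMeasure ξ]
  (P : ℕ → Kernel (S × A) S) [∀ h, IsMarkovKernel (P h)]

lemma measurable_pair {π : ℕ → S → A} (hπ : ∀ h, Measurable (π h)) (k : ℕ) :
    Measurable fun s : S => (s, π k s) :=
  measurable_id.prodMk (hπ k)

lemma occAux_succ_eq (π : ℕ → S → A) (hπ : ∀ h, Measurable (π h)) (n : ℕ) :
    occAux ξ P π (n + 1) = (occAux ξ P π n).bind
      (fun sa => (Kernel.map (P (n + 1)) fun s' => (s', π (n + 2) s')) sa) := by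
  show (occAux ξ P π n).bind _ = _
  congr 1
  funext sa
  rw [Kernel.map_apply _ (measurable_pair hπ (n + 2))]

lemma occAux_prob (π : ℕ → S → A) (hπ : ∀ h, Measurable (π h)) (n : ℕ) :
    IsProbabilityMeasure (occAux ξ P π n) := by
  induction n with
  | zero => exact Measure.isProbabilityMeasure_map (measurable_pair hπ ( 1)).aemeasurable
  | succ n ih =>
    haveI := ih
    haveI : IsMarkovKernel (Kernel.map (P (n + 1)) fun s' => (s', π (n + 2) s')) :=
      Kernel.IsMarkovKernel.map _ (measurable_pair hπ (n + 2))
    rw [occAux_succ_eq ξ P π hπ n]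
    exact isProbabilityMeasure_bind_kernel _ _

lemma occ_prob (π : ℕ → S → A) (hπ : ∀ h, Measurable (π h)) (h : ℕ) :
    IsProbabilityMeasure (occ ξ P π h) :=
  occAux_prob ξ P π hπ _

lemma Ppol_meas (π : ℕ → S → A) (hπ : ∀ h, Measurable (π h)) (h : ℕ)
    {g : S × A → ℝ} (hg : Measurable g) : Measurable (Ppol P π h g) := by
  have : StronglyMeasurable fun x : (S × A) × S =>
      g (x.2, π (h + 1) x.2) :=
    (hg.comp (measurable_snd.prodMk ((hπ (h + 1)).comp measurable_snd))).stronglyMeasurable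
  exact (this.integral_kernel_prod_right' (κ := P h)).measurable

lemma Ppol_bound (π : ℕ → S → A) (h : ℕ)
    {g : S × A → ℝ} {C : ℝ} (hC : ∀ x, |g x| ≤ C) :
    ∀ sa, |Ppol P π h g sa| ≤ C := by
  intro sa
  have h1 : ‖∫ s', g (s', π (h + 1) s') ∂((P h) sa)‖ ≤ C * (((P h) sa) Set.univ).toReal :=
    norm_integral_le_of_norm_le_const (Filter.Eventually.of_forall fun s' => by
      simpa [Real.norm_eq_abs] using hC (s', π (h + 1) s'))
  show |∫ s', g (s', π (h + 1) s') ∂((P h) sa)| ≤ C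
  simpa [Real.norm_eq_abs, measure_univ] using h1

/-- Step identity: `E_π[g(S_{h+1}, A_{h+1})] = E_π[(P_h^π g)(S_h, A_h)]` for `h ≥ 1`. -/
lemma Epol_succ (π : ℕ → S → A) (hπ : ∀ h, Measurable (π h)) (h : ℕ) (hh : 1 ≤ h)
    {g : S × A → ℝ} (hg : Measurable g) {C : ℝ} (hC : ∀ x, |g x| ≤ C) :
    Epol ξ P π (h + 1) g = Epol ξ P π h (Ppol P π h g) := by
  haveI := occ_prob ξ P π hπ h
  obtain ⟨n, rfl⟩ : ∃ n, h = n + 1 := ⟨h - 1, (Nat.succ_pred_eq_of_pos hh).symm⟩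
  have hocc : occ ξ P π (n + 1 + 1) = (occ ξ P π (n + 1)).bind
      (fun sa => (Kernel.map (P (n + 1)) fun s' => (s', π (n + 2) s')) sa) := by
    exact occAux_succ_eq ξ P π hπ n
  haveI : IsMarkovKernel (Kernel.map (P (n + 1)) fun s' => (s', π (n + 2) s')) :=
    Kernel.IsMarkovKernel.map _ (measurable_pair hπ (n + 2))
  unfold Epol
  rw [hocc, integral_bind_kernel _ _ hg (C := C) hC]
  refine integral_congr_ae (Filter.Eventually.of_forall fun sa => ?_)
  show ∫ x, g x ∂((Kernel.map (P (n + 1)) fun s' => (s', π (n + 2) s')) sa) = _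
  rw [Kernel.map_apply _ (measurable_pair hπ (n + 2)),
    integral_map (measurable_pair hπ (n + 2)).aemeasurable
      hg.aestronglyMeasurable]
  rfl

end MDPHelpers

lemma telescope_Icc (G : ℕ → ℝ) (H : ℕ) (hH : 1 ≤ H) :
    ∑ h ∈ Finset.Icc 1 (H - 1), (G (h + 1) - G h) = G H - G 1 := by
  have h1 : Finset.Icc 1 (H - 1) = Finset.Ico 1 H := by
    rw [← Finset.Ico_add_one_right_eq_Icc]
    congr 1
    omega
  rw [h1, Finset.sum_Ico_eq_sum_range]
  have h2 := Finset.sum_range_sub (fun i => G (1 + i)) (H - 1)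
  simp only [show 1 + (H - 1) = H from by omega, Nat.add_zero] at h2
  rw [← h2]
  refine Finset.sum_congr rfl fun i _ => by rw [show 1 + i + 1 = 1 + (i + 1) from by omega]

lemma sum_Icc_split (f : ℕ → ℝ) (H : ℕ) (hH : 1 ≤ H) :
    ∑ h ∈ Finset.Icc 1 H, f h = (∑ h ∈ Finset.Icc 1 (H - 1), f h) + f H := by
  have h1 : Finset.Icc 1 (H - 1) = Finset.Ico 1 H := by
    rw [← Finset.Ico_add_one_right_eq_Icc]
    congr 1
    omega
  rw [h1, ← Finset.sum_Ico_succ_top hH, Finset.Ico_add_one_right_eq_Icc]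

/-- the telescope inequality. -/
theorem telescope_inequality
    (H : ℕ) (hH : 2 ≤ H)
    (ξ : Measure S) [IsProbabilityMeasure ξ]
    (P : ℕ → Kernel (S × A) S) [∀ h, IsMarkovKernel (P h)]
    (r : ℕ → S × A → ℝ) (hr : ∀ h ∈ Finset.Icc 1 H, BddMeas (r h))
    (fhat : ℕ → S × A → ℝ) (hfhatBM : ∀ h ∈ Finset.Icc 1 H, BddMeas (fhat h))
    (hfhatH : fhat H = r H)
    (πhat : ℕ → S → A) (hπhat : ∀ h, Measurable (πhat h))
    (hgreedy : IsGreedy H fhat πhat)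
    (π : ℕ → S → A) (hπ : ∀ h, Measurable (π h)) :
    expReturn ξ P r H π - expReturn ξ P r H πhat ≤
      ∑ h ∈ Finset.Icc 1 (H - 1),
        (Epol ξ P π h (fun sa => Tstar P r h (fhat (h + 1)) sa - fhat h sa) -
          Epol ξ P πhat h (fun sa => Tstar P r h (fhat (h + 1)) sa - fhat h sa)) := by
  have h1H : 1 ≤ H := by omega
  have probπ : ∀ k, IsProbabilityMeasure (occ ξ P π k) := occ_prob ξ P π hπ
  have probπ' : ∀ k, IsProbabilityMeasure (occ ξ P πhat k) := occ_prob ξ P πhat hπhat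
  have key : ∀ h ∈ Finset.Icc 1 (H - 1),
      (Epol ξ P π h (r h) + Epol ξ P π (h + 1) (fhat (h + 1)) - Epol ξ P π h (fhat h)
          ≤ Epol ξ P π h (fun sa => Tstar P r h (fhat (h + 1)) sa - fhat h sa))
      ∧ (Epol ξ P πhat h (fun sa => Tstar P r h (fhat (h + 1)) sa - fhat h sa)
          = Epol ξ P πhat h (r h) + Epol ξ P πhat (h + 1) (fhat (h + 1))
            - Epol ξ P πhat h (fhat h)) := by
    intro h hmem
    simp only [Finset.mem_Icc] at hmem
    obtain ⟨hh1, hh2⟩ := hmem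
    have hhH : h ∈ Finset.Icc 1 H := by simp only [Finset.mem_Icc]; omega
    have hh1H : h + 1 ∈ Finset.Icc 1 H := by simp only [Finset.mem_Icc]; omega
    obtain ⟨hrm, Cr, hrb⟩ := hr h hhH
    obtain ⟨hfm, Cf, hfb⟩ := hfhatBM h hhH
    obtain ⟨hfm1, Cf1, hfb1⟩ := hfhatBM (h + 1) hh1H
    have hsup : (fun s' : S => ⨆ a' : A, fhat (h + 1) (s', a'))
        = fun s' => fhat (h + 1) (s', πhat (h + 1) s') := by
      funext s'
      exact (hgreedy (h + 1) hh1H s').symm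
    have hT : Tstar P r h (fhat (h + 1))
        = fun sa => r h sa + Ppol P πhat h (fhat (h + 1)) sa := by
      funext sa
      show r h sa + ∫ s', (⨆ a' : A, fhat (h + 1) (s', a')) ∂((P h) sa) = _
      rw [hsup]
      rfl
    have hPm : Measurable (Ppol P πhat h (fhat (h + 1))) := Ppol_meas P πhat hπhat h hfm1
    have hPb := Ppol_bound P πhat h (C := Cf1) hfb1
    have hPmπ : Measurable (Ppol P π h (fhat (h + 1))) := Ppol_meas P π hπ h hfm1
    have hPbπ := Ppol_bound P π h (C := Cf1) hfb1
    have split : ∀ (ρ : ℕ → S → A), (∀ k, Measurable (ρ k)) →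
        Epol ξ P ρ h (fun sa => Tstar P r h (fhat (h + 1)) sa - fhat h sa)
          = Epol ξ P ρ h (r h) + Epol ξ P ρ h (Ppol P πhat h (fhat (h + 1)))
            - Epol ξ P ρ h (fhat h) := by
      intro ρ hρ
      haveI := occ_prob ξ P ρ hρ h
      have i1 : Integrable (r h) (occ ξ P ρ h) := integrable_of_bdd hrm hrb
      have i2 : Integrable (Ppol P πhat h (fhat (h + 1))) (occ ξ P ρ h) :=
        integrable_of_bdd hPm hPb
      have i3 : Integrable (fhat h) (occ ξ P ρ h) := integrable_of_bdd hfm hfb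
      have heq : Epol ξ P ρ h (fun sa => Tstar P r h (fhat (h + 1)) sa - fhat h sa)
          = ∫ sa, (r h sa + Ppol P πhat h (fhat (h + 1)) sa - fhat h sa) ∂(occ ξ P ρ h) := by
        unfold Epol
        refine integral_congr_ae (Filter.Eventually.of_forall fun sa => ?_)
        rw [hT]
      rw [heq]
      unfold Epol
      have hs1 := integral_sub (μ := occ ξ P ρ h) (i1.add i2) i3
      simp only [Pi.add_apply] at hs1
      rw [hs1, integral_add i1 i2]
    refine ⟨?_, ?_⟩
    · haveI := probπ h
      rw [split π hπ, Epol_succ ξ P π hπ h hh1 hfm1 hfb1]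
      have h3 : Epol ξ P π h (Ppol P π h (fhat (h + 1)))
          ≤ Epol ξ P π h (Ppol P πhat h (fhat (h + 1))) := by
        unfold Epol
        refine integral_mono (integrable_of_bdd hPmπ hPbπ) (integrable_of_bdd hPm hPb)
          fun sa => ?_
        show (∫ s', fhat (h + 1) (s', π (h + 1) s') ∂((P h) sa))
            ≤ ∫ s', fhat (h + 1) (s', πhat (h + 1) s') ∂((P h) sa)
        refine integral_mono
          (integrable_of_bdd (hfm1.comp (measurable_pair hπ (h + 1))) (C := Cf1)
            (fun s' => hfb1 _))
          (integrable_of_bdd (hfm1.comp (measurable_pair hπhat (h + 1))) (C := Cf1)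
            (fun s' => hfb1 _)) fun s' => ?_
        show fhat (h + 1) (s', π (h + 1) s') ≤ fhat (h + 1) (s', πhat (h + 1) s')
        rw [hgreedy (h + 1) hh1H s']
        exact le_ciSup (f := fun a => fhat (h + 1) (s', a))
          ⟨Cf1, by rintro y ⟨a, rfl⟩; exact (abs_le.1 (hfb1 _)).2⟩ (π (h + 1) s')
      linarith
    · rw [split πhat hπhat, Epol_succ ξ P πhat hπhat h hh1 hfm1 hfb1]
  -- telescoping sums
  have sumπ : ∑ h ∈ Finset.Icc 1 (H - 1), (Epol ξ P π h (r h)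
        + Epol ξ P π (h + 1) (fhat (h + 1)) - Epol ξ P π h (fhat h))
      = (∑ h ∈ Finset.Icc 1 (H - 1), Epol ξ P π h (r h))
        + (Epol ξ P π H (fhat H) - Epol ξ P π 1 (fhat 1)) := by
    rw [← telescope_Icc (fun k => Epol ξ P π k (fhat k)) H h1H, ← Finset.sum_add_distrib]
    exact Finset.sum_congr rfl fun h _ => by ring
  have sumπ' : ∑ h ∈ Finset.Icc 1 (H - 1), (Epol ξ P πhat h (r h)
        + Epol ξ P πhat (h + 1) (fhat (h + 1)) - Epol ξ P πhat h (fhat h))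
      = (∑ h ∈ Finset.Icc 1 (H - 1), Epol ξ P πhat h (r h))
        + (Epol ξ P πhat H (fhat H) - Epol ξ P πhat 1 (fhat 1)) := by
    rw [← telescope_Icc (fun k => Epol ξ P πhat k (fhat k)) H h1H, ← Finset.sum_add_distrib]
    exact Finset.sum_congr rfl fun h _ => by ring
  have Tπ : (∑ h ∈ Finset.Icc 1 (H - 1), Epol ξ P π h (r h))
        + (Epol ξ P π H (fhat H) - Epol ξ P π 1 (fhat 1))
      ≤ ∑ h ∈ Finset.Icc 1 (H - 1),
        Epol ξ P π h (fun sa => Tstar P r h (fhat (h + 1)) sa - fhat h sa) := by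
    rw [← sumπ]
    exact Finset.sum_le_sum fun h hm => (key h hm).1
  have Tπ' : ∑ h ∈ Finset.Icc 1 (H - 1),
        Epol ξ P πhat h (fun sa => Tstar P r h (fhat (h + 1)) sa - fhat h sa)
      = (∑ h ∈ Finset.Icc 1 (H - 1), Epol ξ P πhat h (r h))
        + (Epol ξ P πhat H (fhat H) - Epol ξ P πhat 1 (fhat 1)) := by
    rw [← sumπ']
    exact Finset.sum_congr rfl fun h hm => (key h hm).2
  have E1 : expReturn ξ P r H π
      = (∑ h ∈ Finset.Icc 1 (H - 1), Epol ξ P π h (r h)) + Epol ξ P π H (r H) :=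
    sum_Icc_split _ H h1H
  have E2 : expReturn ξ P r H πhat
      = (∑ h ∈ Finset.Icc 1 (H - 1), Epol ξ P πhat h (r h)) + Epol ξ P πhat H (r H) :=
    sum_Icc_split _ H h1H
  have GH1 : Epol ξ P π H (fhat H) = Epol ξ P π H (r H) := by rw [hfhatH]
  have GH2 : Epol ξ P πhat H (fhat H) = Epol ξ P πhat H (r H) := by rw [hfhatH]
  have stage1 : Epol ξ P π 1 (fhat 1) ≤ Epol ξ P πhat 1 (fhat 1) := by
    have h1mem : (1 : ℕ) ∈ Finset.Icc 1 H := by simp only [Finset.mem_Icc]; omega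
    obtain ⟨hfm1, Cf1, hfb1⟩ := hfhatBM 1 h1mem
    have e1 : Epol ξ P π 1 (fhat 1) = ∫ s, fhat 1 (s, π 1 s) ∂ξ := by
      unfold Epol occ
      rw [show (1 : ℕ) - 1 = 0 from rfl]
      show ∫ sa, fhat 1 sa ∂(ξ.map fun s => (s, π 1 s)) = _
      rw [integral_map (measurable_pair hπ 1).aemeasurable hfm1.aestronglyMeasurable]
    have e2 : Epol ξ P πhat 1 (fhat 1) = ∫ s, fhat 1 (s, πhat 1 s) ∂ξ := by
      unfold Epol occ
      rw [show (1 : ℕ) - 1 = 0 from rfl]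
      show ∫ sa, fhat 1 sa ∂(ξ.map fun s => (s, πhat 1 s)) = _
      rw [integral_map (measurable_pair hπhat 1).aemeasurable hfm1.aestronglyMeasurable]
    rw [e1, e2]
    refine integral_mono
      (integrable_of_bdd (hfm1.comp (measurable_pair hπ 1)) (C := Cf1) (fun s => hfb1 _))
      (integrable_of_bdd (hfm1.comp (measurable_pair hπhat 1)) (C := Cf1) (fun s => hfb1 _))
      fun s => ?_
    show fhat 1 (s, π 1 s) ≤ fhat 1 (s, πhat 1 s)
    rw [hgreedy 1 h1mem s]
    exact le_ciSup (f := fun a => fhat 1 (s, a))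
      ⟨Cf1, by rintro y ⟨a, rfl⟩; exact (abs_le.1 (hfb1 _)).2⟩ (π 1 s)
  rw [Finset.sum_sub_distrib]
  linarith


end RLStability
end
end

section
/- Deterministic basic inequality for ridge regression: Let w̄ ∈ ℝ^d satisfy ‖w̄‖_2 ≤ R, set ζ_i = y_i − ⟨x_i, w̄⟩ for i = 1, …, n, and define Z = sup { (1/n) ∑_{i=1}^n ⟨x_i, w⟩ ζ_i : w ∈ ℝ^d, ‖w‖_D ≤ 1 }. Then the ridge estimate ŵ satisfies ‖ŵ − w̄‖²_D ≤ 2 ‖ŵ − w̄‖_D · Z + λ R². -/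
/-!
The ridge objective is a quadratic whose Hessian is `2 (Σ̂ + λ I)`, so the first-order condition at
`ŵ`, tested in the direction `v = ŵ - w̄`, gives the identity
`‖v‖²_D = (1/n) ∑ᵢ ⟨xᵢ, v⟩ ζᵢ - λ ⟨w̄, v⟩`.
By homogeneity of `‖·‖_D` the first term is at most `‖v‖_D Z`, and expanding `0 ≤ λ ‖w̄ + v‖²` gives
`-2λ ⟨w̄, v⟩ ≤ λ ‖w̄‖² + λ ‖v‖² ≤ λ R² + ‖v‖²_D`.
-/

open Matrix

noncomputable section

namespace RidgeBasic

variable (d n : ℕ)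

/-- Empirical covariance `Σ̂ = (1/n) ∑ xᵢ xᵢᵀ`. -/
def empCov (x : Fin n → Fin d → ℝ) : Matrix (Fin d) (Fin d) ℝ :=
  Matrix.of fun i j => (n : ℝ)⁻¹ * ∑ k, x k i * x k j

/-- The norm `‖w‖_D = (wᵀ (Σ̂ + λ I) w)^{1/2}`. -/
def normD (x : Fin n → Fin d → ℝ) (lam : ℝ) (w : Fin d → ℝ) : ℝ :=
  Real.sqrt (w ⬝ᵥ (empCov d n x + lam • (1 : Matrix (Fin d) (Fin d) ℝ)).mulVec w)

/-- The ridge-regression objective. -/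
def ridgeLoss (x : Fin n → Fin d → ℝ) (y : Fin n → ℝ) (lam : ℝ) (w : Fin d → ℝ) : ℝ :=
  (n : ℝ)⁻¹ * ∑ i, (x i ⬝ᵥ w - y i) ^ 2 + lam * ∑ j, w j ^ 2

/-- `Z = sup { (1/n) ∑ᵢ ⟨xᵢ, w⟩ ζᵢ : ‖w‖_D ≤ 1 }`. -/
def Zsup (x : Fin n → Fin d → ℝ) (lam : ℝ) (ζ : Fin n → ℝ) : ℝ :=
  sSup {t | ∃ w : Fin d → ℝ, normD d n x lam w ≤ 1 ∧
    t = (n : ℝ)⁻¹ * ∑ i, (x i ⬝ᵥ w) * ζ i}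

theorem le_mul_sSup_of_abs_le {E : Type*} [SMul ℝ E] {p f : E → ℝ} {C : ℝ}
    (hp_nonneg : ∀ w, 0 ≤ p w) (hp_smul : ∀ c : ℝ, 0 < c → ∀ w, p (c • w) = c * p w)
    (hf_smul : ∀ c : ℝ, 0 < c → ∀ w, f (c • w) = c * f w) (hf : ∀ w, |f w| ≤ C * p w) (v : E) :
    f v ≤ p v * sSup {t | ∃ w, p w ≤ 1 ∧ t = f w} := by
  rcases (hp_nonneg v).eq_or_lt with hv | hv
  · have hfv : |f v| ≤ 0 := by simpa [← hv] using hf v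
    rw [← hv, zero_mul]
    exact (le_abs_self _).trans hfv
  · have hbdd : BddAbove {t | ∃ w, p w ≤ 1 ∧ t = f w} := by
      refine ⟨|C|, ?_⟩
      rintro t ⟨w, hw, rfl⟩
      calc f w ≤ |f w| := le_abs_self _
        _ ≤ C * p w := hf w
        _ ≤ |C| * p w := mul_le_mul_of_nonneg_right (le_abs_self C) (hp_nonneg w)
        _ ≤ |C| := mul_le_of_le_one_right (abs_nonneg C) hw
    have hmem : (p v)⁻¹ * f v ∈ {t | ∃ w, p w ≤ 1 ∧ t = f w} :=
      ⟨(p v)⁻¹ • v, by rw [hp_smul _ (inv_pos.2 hv), inv_mul_cancel₀ hv.ne'],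
        (hf_smul _ (inv_pos.2 hv) v).symm⟩
    calc f v = p v * ((p v)⁻¹ * f v) := by field_simp
      _ ≤ p v * sSup {t | ∃ w, p w ≤ 1 ∧ t = f w} :=
        mul_le_mul_of_nonneg_left (le_csSup hbdd hmem) hv.le

section

variable {d n : ℕ} (x : Fin n → Fin d → ℝ) (lam : ℝ)

def innerD (u v : Fin d → ℝ) : ℝ :=
  (n : ℝ)⁻¹ * ∑ i, (x i ⬝ᵥ u) * (x i ⬝ᵥ v) + lam * (u ⬝ᵥ v)

/-- Half the directional derivative of `ridgeLoss` at `w` in the direction `u`. -/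
def ridgeGrad (y : Fin n → ℝ) (w u : Fin d → ℝ) : ℝ :=
  lam * (w ⬝ᵥ u) - (n : ℝ)⁻¹ * ∑ i, (x i ⬝ᵥ u) * (y i - x i ⬝ᵥ w)

lemma empCov_eq_smul_transpose_mul : empCov d n x = (n : ℝ)⁻¹ • ((of x)ᵀ * of x) := by
  ext i j
  simp [empCov, mul_apply]

lemma dotProduct_mulVec_self_eq_innerD (w : Fin d → ℝ) :
    w ⬝ᵥ (empCov d n x + lam • (1 : Matrix (Fin d) (Fin d) ℝ)) *ᵥ w = innerD x lam w w := by
  simp only [empCov_eq_smul_transpose_mul, add_mulVec, smul_mulVec, ← mulVec_mulVec,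
    dotProduct_add, dotProduct_smul, dotProduct_mulVec _ (of x)ᵀ, vecMul_transpose, one_mulVec,
    innerD, smul_eq_mul]
  rfl

lemma ridgeLoss_add_smul (y : Fin n → ℝ) (w u : Fin d → ℝ) (t : ℝ) :
    ridgeLoss d n x y lam (w + t • u) =
      ridgeLoss d n x y lam w + 2 * t * ridgeGrad x lam y w u + t ^ 2 * innerD x lam u u := by
  have hfit (i : Fin n) : (x i ⬝ᵥ (w + t • u) - y i) ^ 2 = (x i ⬝ᵥ w - y i) ^ 2
      - 2 * t * ((x i ⬝ᵥ u) * (y i - x i ⬝ᵥ w)) + t ^ 2 * ((x i ⬝ᵥ u) * (x i ⬝ᵥ u)) := by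
    rw [dotProduct_add, dotProduct_smul, smul_eq_mul]
    ring
  have hpen (j : Fin d) :
      (w + t • u) j ^ 2 = w j ^ 2 + 2 * t * (w j * u j) + t ^ 2 * (u j * u j) := by
    rw [Pi.add_apply, Pi.smul_apply, smul_eq_mul]
    ring
  simp only [ridgeLoss, ridgeGrad, innerD, hfit, hpen, Finset.sum_add_distrib,
    Finset.sum_sub_distrib, ← Finset.mul_sum]
  simp only [dotProduct]
  ring

lemma ridgeGrad_add_left (y : Fin n → ℝ) (w v u : Fin d → ℝ) :
    ridgeGrad x lam y (w + v) u = ridgeGrad x lam y w u + innerD x lam v u := by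
  have hres (i : Fin n) : (x i ⬝ᵥ u) * (y i - x i ⬝ᵥ (w + v)) =
      (x i ⬝ᵥ u) * (y i - x i ⬝ᵥ w) - (x i ⬝ᵥ v) * (x i ⬝ᵥ u) := by
    rw [dotProduct_add]
    ring
  simp only [ridgeGrad, innerD, hres, Finset.sum_sub_distrib, add_dotProduct]
  ring

lemma ridgeGrad_eq_zero_of_forall_le (y : Fin n → ℝ) (what : Fin d → ℝ)
    (hmin : ∀ w, ridgeLoss d n x y lam what ≤ ridgeLoss d n x y lam w) (u : Fin d → ℝ) :
    ridgeGrad x lam y what u = 0 := by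
  have hquad (t : ℝ) :
      0 ≤ innerD x lam u u * (t * t) + 2 * ridgeGrad x lam y what u * t + 0 := by
    have := hmin (what + t • u)
    rw [ridgeLoss_add_smul] at this
    linarith
  have hdisc := discrim_le_zero hquad
  rw [discrim] at hdisc
  nlinarith [sq_nonneg (ridgeGrad x lam y what u)]

lemma mul_dotProduct_self_le_innerD (w : Fin d → ℝ) : lam * (w ⬝ᵥ w) ≤ innerD x lam w w :=
  le_add_of_nonneg_left <| mul_nonneg (by positivity) <|
    Finset.sum_nonneg fun i _ => mul_self_nonneg (x i ⬝ᵥ w)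

lemma inv_mul_sum_sq_le_innerD (hlam : 0 ≤ lam) (w : Fin d → ℝ) :
    (n : ℝ)⁻¹ * ∑ i, (x i ⬝ᵥ w) ^ 2 ≤ innerD x lam w w := by
  simp only [innerD, sq]
  exact le_add_of_nonneg_right <| mul_nonneg hlam <|
    Finset.sum_nonneg fun j _ => mul_self_nonneg (w j)

lemma innerD_self_nonneg (hlam : 0 ≤ lam) (w : Fin d → ℝ) : 0 ≤ innerD x lam w w :=
  (mul_nonneg hlam (Finset.sum_nonneg fun j _ => mul_self_nonneg (w j))).trans
    (mul_dotProduct_self_le_innerD x lam w)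

lemma normD_nonneg (w : Fin d → ℝ) : 0 ≤ normD d n x lam w :=
  Real.sqrt_nonneg _

lemma normD_sq (hlam : 0 ≤ lam) (w : Fin d → ℝ) :
    normD d n x lam w ^ 2 = innerD x lam w w := by
  rw [normD, dotProduct_mulVec_self_eq_innerD, Real.sq_sqrt (innerD_self_nonneg x lam hlam w)]

lemma normD_smul {c : ℝ} (hc : 0 ≤ c) (w : Fin d → ℝ) :
    normD d n x lam (c • w) = c * normD d n x lam w := by
  simp only [normD, mulVec_smul, dotProduct_smul, smul_dotProduct, smul_eq_mul, ← mul_assoc]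
  rw [Real.sqrt_mul (mul_self_nonneg c), Real.sqrt_mul_self hc]

lemma abs_sum_mul_le_normD (hlam : 0 ≤ lam) (ζ : Fin n → ℝ) (w : Fin d → ℝ) :
    |(n : ℝ)⁻¹ * ∑ i, (x i ⬝ᵥ w) * ζ i| ≤
      √((n : ℝ)⁻¹ * ∑ i, ζ i ^ 2) * normD d n x lam w := by
  rw [← Real.sqrt_sq (normD_nonneg x lam w), normD_sq x lam hlam,
    ← Real.sqrt_mul' _ (innerD_self_nonneg x lam hlam w)]
  apply Real.abs_le_sqrt
  calc ((n : ℝ)⁻¹ * ∑ i, (x i ⬝ᵥ w) * ζ i) ^ 2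
      = (n : ℝ)⁻¹ ^ 2 * (∑ i, (x i ⬝ᵥ w) * ζ i) ^ 2 := by ring
    _ ≤ (n : ℝ)⁻¹ ^ 2 * ((∑ i, (x i ⬝ᵥ w) ^ 2) * ∑ i, ζ i ^ 2) := by
      gcongr
      exact Finset.sum_mul_sq_le_sq_mul_sq _ _ _
    _ = ((n : ℝ)⁻¹ * ∑ i, ζ i ^ 2) * ((n : ℝ)⁻¹ * ∑ i, (x i ⬝ᵥ w) ^ 2) := by ring
    _ ≤ ((n : ℝ)⁻¹ * ∑ i, ζ i ^ 2) * innerD x lam w w :=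
      mul_le_mul_of_nonneg_left (inv_mul_sum_sq_le_innerD x lam hlam w) (by positivity)

lemma sum_mul_le_normD_mul_Zsup (hlam : 0 ≤ lam) (ζ : Fin n → ℝ) (v : Fin d → ℝ) :
    (n : ℝ)⁻¹ * ∑ i, (x i ⬝ᵥ v) * ζ i ≤ normD d n x lam v * Zsup d n x lam ζ :=
  le_mul_sSup_of_abs_le (normD_nonneg x lam) (fun _ hc => normD_smul x lam hc.le)
    (fun c _ w => by simp only [dotProduct_smul, smul_eq_mul, Finset.mul_sum]; ring_nf)
    (abs_sum_mul_le_normD x lam hlam ζ) v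

end

theorem ridge_basic_inequality
    (x : Fin n → Fin d → ℝ) (y : Fin n → ℝ)
    (lam : ℝ) (hlam : 0 < lam)
    (wbar : Fin d → ℝ) (R : ℝ) (hR : Real.sqrt (∑ j, wbar j ^ 2) ≤ R)
    (what : Fin d → ℝ)
    (hmin : ∀ w : Fin d → ℝ, ridgeLoss d n x y lam what ≤ ridgeLoss d n x y lam w) :
    normD d n x lam (what - wbar) ^ 2 ≤
      2 * normD d n x lam (what - wbar) *
          Zsup d n x lam (fun i => y i - x i ⬝ᵥ wbar) +
        lam * R ^ 2 := by
  set v := what - wbar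
  have hbasic : normD d n x lam v ^ 2 =
      (n : ℝ)⁻¹ * ∑ i, (x i ⬝ᵥ v) * (y i - x i ⬝ᵥ wbar) - lam * (wbar ⬝ᵥ v) := by
    have hgrad := ridgeGrad_eq_zero_of_forall_le x lam y what hmin v
    rw [← add_sub_cancel wbar what, ridgeGrad_add_left, ridgeGrad] at hgrad
    rw [normD_sq x lam hlam.le]
    linarith
  have hnoise := sum_mul_le_normD_mul_Zsup x lam hlam.le (fun i => y i - x i ⬝ᵥ wbar) v
  have hpen : lam * (v ⬝ᵥ v) ≤ normD d n x lam v ^ 2 :=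
    normD_sq x lam hlam.le v ▸ mul_dotProduct_self_le_innerD x lam v
  have hwbar : wbar ⬝ᵥ wbar ≤ R ^ 2 :=
    (Real.sqrt_le_left ((Real.sqrt_nonneg _).trans hR)).1 (by simpa only [dotProduct, sq] using hR)
  have hwhat : 0 ≤ lam * ((wbar + v) ⬝ᵥ (wbar + v)) :=
    mul_nonneg hlam.le (Finset.sum_nonneg fun j _ => mul_self_nonneg _)
  simp only [add_dotProduct, dotProduct_add, dotProduct_comm v wbar] at hwhat
  linarith [mul_le_mul_of_nonneg_left hwbar hlam.le]

end RidgeBasic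
end
end

section
/- Curvature of constrained linear maximization (linear and quadratic perturbation bounds): In the constrained linear maximization setting, assume (Sm1) and (Sm2), that ‖φ − φ*‖_H ≤ ‖(I − P_G) H^{−1/2} Σ^{−1/2}‖_op / (3 L ‖H^{−1/2} Σ^{−1/2}‖_op), and that ‖P_G H^{−1/2} (w − w*)‖_2 ≤ 1/(12 L). Set κ = (5/√d) ‖w*‖_Σ ‖(I − P_G) H^{−1/2} Σ^{−1/2}‖_op². Then: (i) ‖φ − φ*‖_{Σ^{−1}} ≤ κ √d · ‖w − w*‖_Σ / ‖w*‖_Σ; and (ii) wᵀ (φ − φ*) ≤ κ √d · ‖w*‖_Σ · (‖w − w*‖_Σ / ‖w*‖_Σ)². -/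
open Matrix

noncomputable section

/-- The positive semidefinite square root of a positive semidefinite matrix
(as defined in Mathlib of December 2024, since removed). -/
def Matrix.PosSemidef.sqrt {n 𝕜 : Type*} [Fintype n] [DecidableEq n] [RCLike 𝕜]
    [PartialOrder 𝕜] [StarOrderedRing 𝕜]
    {A : Matrix n n 𝕜} (hA : A.PosSemidef) : Matrix n n 𝕜 :=
  hA.1.eigenvectorUnitary.1 * diagonal ((↑) ∘ (√·) ∘ hA.1.eigenvalues) *
    (star hA.1.eigenvectorUnitary : Matrix n n 𝕜)

theorem Matrix.PosSemidef.sqrt_isHermitian {n : Type*} [Fintype n] [DecidableEq n]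
    {A : Matrix n n ℝ} (hA : A.PosSemidef) : hA.sqrt.IsHermitian := by
  unfold Matrix.PosSemidef.sqrt
  simp [Matrix.IsHermitian, conjTranspose_mul, diagonal_conjTranspose, Matrix.mul_assoc,
    Matrix.star_eq_conjTranspose, Matrix.conjTranspose_eq_transpose_of_trivial]

theorem Matrix.PosSemidef.sqrt_mul_self {n : Type*} [Fintype n] [DecidableEq n]
    {A : Matrix n n ℝ} (hA : A.PosSemidef) : hA.sqrt * hA.sqrt = A := by
  unfold Matrix.PosSemidef.sqrt
  have hUU : (star hA.1.eigenvectorUnitary : Matrix n n ℝ) * hA.1.eigenvectorUnitary.1 = 1 :=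
    Unitary.coe_star_mul_self _
  have hDD : diagonal (RCLike.ofReal (K := ℝ) ∘ (√·) ∘ hA.1.eigenvalues) *
      diagonal (RCLike.ofReal (K := ℝ) ∘ (√·) ∘ hA.1.eigenvalues) =
      diagonal (RCLike.ofReal ∘ hA.1.eigenvalues : n → ℝ) := by
    rw [diagonal_mul_diagonal]
    congr 1
    funext i
    simp [Real.mul_self_sqrt (hA.eigenvalues_nonneg i)]
  calc _ = hA.1.eigenvectorUnitary.1 * (diagonal (RCLike.ofReal (K := ℝ) ∘ (√·) ∘ hA.1.eigenvalues) *
        ((star hA.1.eigenvectorUnitary : Matrix n n ℝ) * hA.1.eigenvectorUnitary.1) *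
        diagonal (RCLike.ofReal (K := ℝ) ∘ (√·) ∘ hA.1.eigenvalues)) *
        (star hA.1.eigenvectorUnitary : Matrix n n ℝ) := by simp only [Matrix.mul_assoc]
    _ = hA.1.eigenvectorUnitary.1 * diagonal (RCLike.ofReal ∘ hA.1.eigenvalues : n → ℝ) *
        (star hA.1.eigenvectorUnitary : Matrix n n ℝ) := by
        rw [hUU, Matrix.mul_one, hDD]
    _ = A := by
        conv_rhs => rw [hA.1.spectral_theorem]
        rw [Unitary.conjStarAlgAut_apply]

namespace ConstrainedCurvature

variable (d m : ℕ)

/-- The gradient of `f : ℝ^d → ℝ` at `x`, as a vector. -/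
def grad (f : (Fin d → ℝ) → ℝ) (x : Fin d → ℝ) : Fin d → ℝ :=
  fun j => fderiv ℝ f x (Pi.single j 1)

/-- The Jacobian matrix `∇g(x) ∈ ℝ^{m×d}`, whose rows are the gradients `∇g_i(x)ᵀ`. -/
def gradMat (g : (Fin d → ℝ) → Fin m → ℝ) (x : Fin d → ℝ) :
    Matrix (Fin m) (Fin d) ℝ :=
  Matrix.of fun i j => grad d (fun y => g y i) x j

/-- The Hessian matrix `∇²f(x) ∈ ℝ^{d×d}`. -/
def hessMat (f : (Fin d → ℝ) → ℝ) (x : Fin d → ℝ) : Matrix (Fin d) (Fin d) ℝ :=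
  Matrix.of fun j k => grad d (fun y => grad d f y k) x j

/-- The local Hessian `H = ∑ᵢ λ*ᵢ ∇²gᵢ(φ*)`. -/
def Hmat (g : (Fin d → ℝ) → Fin m → ℝ) (xstar : Fin d → ℝ)
    (lamstar : Fin m → ℝ) : Matrix (Fin d) (Fin d) ℝ :=
  ∑ i, lamstar i • hessMat d (fun y => g y i) xstar

/-- The matrix `W = ∇g(φ*) H⁻¹ ∇g(φ*)ᵀ`. -/
def Wmat (g : (Fin d → ℝ) → Fin m → ℝ) (xstar : Fin d → ℝ)
    (lamstar : Fin m → ℝ) : Matrix (Fin m) (Fin m) ℝ :=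
  gradMat d m g xstar * (Hmat d m g xstar lamstar)⁻¹ * (gradMat d m g xstar)ᵀ

/-- The norm `‖x‖_M = (xᵀ M x)^{1/2}` induced by a (positive definite) matrix `M`. -/
def mnorm {k : ℕ} (M : Matrix (Fin k) (Fin k) ℝ) (x : Fin k → ℝ) : ℝ :=
  Real.sqrt (x ⬝ᵥ M.mulVec x)

/-- The Euclidean norm. -/
def enorm {k : ℕ} (x : Fin k → ℝ) : ℝ :=
  Real.sqrt (∑ j, x j ^ 2)

/-- The `ℓ₂` operator norm of a (possibly rectangular) matrix. -/
def opNorm {m' n' : ℕ} (M : Matrix (Fin m') (Fin n') ℝ) : ℝ :=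
  sSup {t | ∃ x : Fin n' → ℝ, enorm x ≤ 1 ∧ t = enorm (M.mulVec x)}

/-- The projection `P_G = H^{-1/2} ∇g(φ*)ᵀ W⁻¹ ∇g(φ*) H^{-1/2}` onto
`G = span{H^{-1/2} ∇gᵢ(φ*)}`. -/
def PG (g : (Fin d → ℝ) → Fin m → ℝ) (xstar : Fin d → ℝ) (lamstar : Fin m → ℝ)
    (hH : (Hmat d m g xstar lamstar).PosSemidef) : Matrix (Fin d) (Fin d) ℝ :=
  hH.sqrt⁻¹ * (gradMat d m g xstar)ᵀ * (Wmat d m g xstar lamstar)⁻¹ *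
    gradMat d m g xstar * hH.sqrt⁻¹

/-! ### auxiliary lemmas -/

section Aux

variable {k l : ℕ}

lemma enorm_nonneg' (x : Fin k → ℝ) : 0 ≤ enorm x := Real.sqrt_nonneg _

lemma dot_self_eq_sum_sq (x : Fin k → ℝ) : x ⬝ᵥ x = ∑ j, x j ^ 2 := by
  simp [dotProduct, pow_two]

lemma enorm_eq_sqrt_dot (x : Fin k → ℝ) : enorm x = Real.sqrt (x ⬝ᵥ x) := by
  rw [enorm, dot_self_eq_sum_sq]

lemma sq_enorm (x : Fin k → ℝ) : enorm x ^ 2 = x ⬝ᵥ x := by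
  rw [enorm_eq_sqrt_dot, Real.sq_sqrt]
  rw [dot_self_eq_sum_sq]
  positivity

lemma enorm_eq_zero {x : Fin k → ℝ} (h : enorm x = 0) : x = 0 := by
  have h2 : x ⬝ᵥ x = 0 := by
    have := sq_enorm x
    rw [h] at this; simpa using this.symm
  rw [dot_self_eq_sum_sq] at h2
  have := (Finset.sum_eq_zero_iff_of_nonneg (fun i _ => sq_nonneg (x i))).1 h2
  funext i
  have := this i (Finset.mem_univ i)
  exact pow_eq_zero_iff (n := 2) (by norm_num) |>.1 this

lemma enorm_neg (x : Fin k → ℝ) : enorm (-x) = enorm x := by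
  simp [enorm]

lemma enorm_smul (c : ℝ) (x : Fin k → ℝ) : enorm (c • x) = |c| * enorm x := by
  simp only [enorm, Pi.smul_apply, smul_eq_mul, mul_pow, ← Finset.mul_sum]
  rw [Real.sqrt_mul (sq_nonneg c), Real.sqrt_sq_eq_abs]

lemma dot_le_enorm_mul_enorm (x y : Fin k → ℝ) : x ⬝ᵥ y ≤ enorm x * enorm y := by
  have h := Finset.sum_mul_sq_le_sq_mul_sq Finset.univ x y
  have h1 : x ⬝ᵥ y = ∑ i, x i * y i := rfl
  have h2 : (x ⬝ᵥ y) ^ 2 ≤ (enorm x * enorm y) ^ 2 := by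
    rw [mul_pow, sq_enorm, sq_enorm, dot_self_eq_sum_sq, dot_self_eq_sum_sq, h1]
    exact h
  have h3 : x ⬝ᵥ y ≤ |x ⬝ᵥ y| := le_abs_self _
  calc x ⬝ᵥ y ≤ |x ⬝ᵥ y| := h3
    _ = Real.sqrt ((x ⬝ᵥ y) ^ 2) := (Real.sqrt_sq_eq_abs _).symm
    _ ≤ Real.sqrt ((enorm x * enorm y) ^ 2) := Real.sqrt_le_sqrt h2
    _ = |enorm x * enorm y| := Real.sqrt_sq_eq_abs _
    _ = enorm x * enorm y := abs_of_nonneg (mul_nonneg (enorm_nonneg' x) (enorm_nonneg' y))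

lemma abs_dot_le (x y : Fin k → ℝ) : |x ⬝ᵥ y| ≤ enorm x * enorm y := by
  rcases abs_cases (x ⬝ᵥ y) with ⟨h, _⟩ | ⟨h, _⟩
  · rw [h]; exact dot_le_enorm_mul_enorm x y
  · rw [h]
    have := dot_le_enorm_mul_enorm (-x) y
    rw [neg_dotProduct] at this
    rw [enorm_neg] at this
    linarith

lemma enorm_add_le (x y : Fin k → ℝ) : enorm (x + y) ≤ enorm x + enorm y := by
  have h2 : enorm (x + y) ^ 2 ≤ (enorm x + enorm y) ^ 2 := by
    rw [sq_enorm]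
    have hxy := dot_le_enorm_mul_enorm x y
    have hx := sq_enorm x
    have hy := sq_enorm y
    have : (x + y) ⬝ᵥ (x + y) = x ⬝ᵥ x + 2 * (x ⬝ᵥ y) + y ⬝ᵥ y := by
      simp [dotProduct_add, add_dotProduct, dotProduct_comm x y]; ring
    rw [this]; nlinarith [enorm_nonneg' x, enorm_nonneg' y]
  calc enorm (x + y) = Real.sqrt (enorm (x + y) ^ 2) :=
        (Real.sqrt_sq (enorm_nonneg' _)).symm
    _ ≤ Real.sqrt ((enorm x + enorm y) ^ 2) := Real.sqrt_le_sqrt h2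
    _ = enorm x + enorm y := Real.sqrt_sq (add_nonneg (enorm_nonneg' x) (enorm_nonneg' y))

end Aux


section OpNorm

variable {k l : ℕ}

lemma opNorm_set_nonempty (M : Matrix (Fin k) (Fin l) ℝ) :
    Set.Nonempty {t | ∃ x : Fin l → ℝ, enorm x ≤ 1 ∧ t = enorm (M.mulVec x)} := by
  refine ⟨enorm (M.mulVec 0), 0, ?_, rfl⟩
  simp [enorm]

lemma opNorm_set_bddAbove (M : Matrix (Fin k) (Fin l) ℝ) :
    BddAbove {t | ∃ x : Fin l → ℝ, enorm x ≤ 1 ∧ t = enorm (M.mulVec x)} := by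
  refine ⟨Real.sqrt (∑ i, ∑ j, M i j ^ 2), ?_⟩
  rintro t ⟨x, hx, rfl⟩
  have hx2 : ∑ j, x j ^ 2 ≤ 1 := by
    have h1 := sq_enorm x
    rw [dot_self_eq_sum_sq] at h1
    nlinarith [enorm_nonneg' x]
  have key : ∑ i, (M.mulVec x) i ^ 2 ≤ ∑ i, ∑ j, M i j ^ 2 := by
    apply Finset.sum_le_sum
    intro i _
    have hcs := Finset.sum_mul_sq_le_sq_mul_sq Finset.univ (fun j => M i j) x
    have h1 : (M.mulVec x) i = ∑ j, M i j * x j := rfl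
    rw [h1]
    calc (∑ j, M i j * x j) ^ 2 ≤ (∑ j, M i j ^ 2) * ∑ j, x j ^ 2 := hcs
      _ ≤ (∑ j, M i j ^ 2) * 1 := by
          apply mul_le_mul_of_nonneg_left hx2
          positivity
      _ = ∑ j, M i j ^ 2 := mul_one _
  exact Real.sqrt_le_sqrt key

lemma opNorm_nonneg (M : Matrix (Fin k) (Fin l) ℝ) : 0 ≤ opNorm M := by
  have h0 : enorm (M.mulVec (0 : Fin l → ℝ)) ∈
      {t | ∃ x : Fin l → ℝ, enorm x ≤ 1 ∧ t = enorm (M.mulVec x)} := ⟨0, by simp [enorm], rfl⟩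
  have := le_csSup (opNorm_set_bddAbove M) h0
  exact le_trans (enorm_nonneg' _) this

lemma enorm_mulVec_le (M : Matrix (Fin k) (Fin l) ℝ) (x : Fin l → ℝ) :
    enorm (M.mulVec x) ≤ opNorm M * enorm x := by
  rcases eq_or_lt_of_le (enorm_nonneg' x) with h0 | hpos
  · have hx0 : x = 0 := enorm_eq_zero h0.symm
    subst hx0
    simp only [mulVec_zero]
    rw [← h0]
    simp [enorm]
  · set c := enorm x with hc
    have hmem : enorm (M.mulVec (c⁻¹ • x)) ∈
        {t | ∃ y : Fin l → ℝ, enorm y ≤ 1 ∧ t = enorm (M.mulVec y)} := by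
      refine ⟨c⁻¹ • x, ?_, rfl⟩
      rw [enorm_smul, abs_of_nonneg (by positivity), ← hc]
      rw [inv_mul_cancel₀ (ne_of_gt hpos)]
    have hle := le_csSup (opNorm_set_bddAbove M) hmem
    rw [mulVec_smul, enorm_smul, abs_of_nonneg (by positivity)] at hle
    have : c⁻¹ * enorm (M.mulVec x) ≤ opNorm M := hle
    calc enorm (M.mulVec x) = c * (c⁻¹ * enorm (M.mulVec x)) := by
          field_simp
      _ ≤ c * opNorm M := by
          apply mul_le_mul_of_nonneg_left this (le_of_lt hpos)
      _ = opNorm M * c := mul_comm _ _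

lemma opNorm_le_of_bound {M : Matrix (Fin k) (Fin l) ℝ} {c : ℝ} (hc : 0 ≤ c)
    (h : ∀ x, enorm (M.mulVec x) ≤ c * enorm x) : opNorm M ≤ c := by
  apply csSup_le (opNorm_set_nonempty M)
  rintro t ⟨x, hx, rfl⟩
  calc enorm (M.mulVec x) ≤ c * enorm x := h x
    _ ≤ c * 1 := mul_le_mul_of_nonneg_left hx hc
    _ = c := mul_one c

lemma enorm_transpose_mulVec_le (M : Matrix (Fin k) (Fin l) ℝ) (x : Fin k → ℝ) :
    enorm (Mᵀ.mulVec x) ≤ opNorm M * enorm x := by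
  rcases eq_or_lt_of_le (enorm_nonneg' (Mᵀ.mulVec x)) with h0 | hpos
  · rw [← h0]
    exact mul_nonneg (opNorm_nonneg M) (enorm_nonneg' x)
  · have key : enorm (Mᵀ.mulVec x) ^ 2 ≤ enorm x * (opNorm M * enorm (Mᵀ.mulVec x)) := by
      rw [sq_enorm]
      have h1 : Mᵀ.mulVec x ⬝ᵥ Mᵀ.mulVec x = x ⬝ᵥ M.mulVec (Mᵀ.mulVec x) := by
        rw [dotProduct_mulVec x M (Mᵀ.mulVec x), ← mulVec_transpose M x]
      rw [h1]
      calc x ⬝ᵥ M.mulVec (Mᵀ.mulVec x) ≤ enorm x * enorm (M.mulVec (Mᵀ.mulVec x)) :=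
            dot_le_enorm_mul_enorm _ _
        _ ≤ enorm x * (opNorm M * enorm (Mᵀ.mulVec x)) := by
            apply mul_le_mul_of_nonneg_left (enorm_mulVec_le M _) (enorm_nonneg' x)
    nlinarith [enorm_nonneg' x, hpos]

end OpNorm


section MatAux

variable {k l : ℕ}

lemma dot_transpose_mulVec (A : Matrix (Fin k) (Fin l) ℝ) (x : Fin l → ℝ) (y : Fin k → ℝ) :
    x ⬝ᵥ Aᵀ.mulVec y = A.mulVec x ⬝ᵥ y := by
  rw [dotProduct_mulVec, vecMul_transpose]

lemma dot_mulVec_eq (A : Matrix (Fin k) (Fin l) ℝ) (x : Fin k → ℝ) (y : Fin l → ℝ) :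
    x ⬝ᵥ A.mulVec y = Aᵀ.mulVec x ⬝ᵥ y := by
  conv_lhs => rw [← transpose_transpose A]
  exact dot_transpose_mulVec Aᵀ x y

lemma dot_symm_mulVec {A : Matrix (Fin k) (Fin k) ℝ} (hA : Aᵀ = A) (x y : Fin k → ℝ) :
    x ⬝ᵥ A.mulVec y = A.mulVec x ⬝ᵥ y := by
  conv_lhs => rw [← hA]
  exact dot_transpose_mulVec A x y

lemma mnorm_eq_enorm {M F : Matrix (Fin k) (Fin k) ℝ} (hFt : Fᵀ = F) (hFF : F * F = M)
    (x : Fin k → ℝ) : mnorm M x = enorm (F.mulVec x) := by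
  rw [mnorm, enorm_eq_sqrt_dot]
  congr 1
  rw [← hFF, ← mulVec_mulVec, dot_symm_mulVec hFt]

lemma sq_enorm_proj {O : Matrix (Fin l) (Fin k) ℝ} {P : Matrix (Fin k) (Fin k) ℝ}
    (hP : Oᵀ * O = P) (x : Fin k → ℝ) :
    O.mulVec x ⬝ᵥ O.mulVec x = x ⬝ᵥ P.mulVec x := by
  rw [← dot_transpose_mulVec O x (O.mulVec x), mulVec_mulVec, hP]

lemma enorm_proj_le {P : Matrix (Fin k) (Fin k) ℝ} (hPt : Pᵀ = P) (hPP : P * P = P)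
    (x : Fin k → ℝ) : enorm (P.mulVec x) ≤ enorm x := by
  have h1 : P.mulVec x ⬝ᵥ P.mulVec x = x ⬝ᵥ P.mulVec x := by
    rw [← dot_symm_mulVec hPt x (P.mulVec x), mulVec_mulVec, hPP]
  rcases eq_or_lt_of_le (enorm_nonneg' (P.mulVec x)) with h0 | hpos
  · rw [← h0]; exact enorm_nonneg' x
  · have key : enorm (P.mulVec x) ^ 2 ≤ enorm x * enorm (P.mulVec x) := by
      rw [sq_enorm, h1]
      exact dot_le_enorm_mul_enorm x (P.mulVec x)
    nlinarith

lemma enorm_O_eq_enorm_P {O : Matrix (Fin l) (Fin k) ℝ} {P : Matrix (Fin k) (Fin k) ℝ}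
    (hP : Oᵀ * O = P) (hPt : Pᵀ = P) (hPP : P * P = P) (x : Fin k → ℝ) :
    enorm (O.mulVec x) = enorm (P.mulVec x) := by
  rw [enorm_eq_sqrt_dot, enorm_eq_sqrt_dot]
  congr 1
  rw [sq_enorm_proj hP]
  rw [← dot_symm_mulVec hPt x (P.mulVec x), mulVec_mulVec, hPP]

lemma real_conjTranspose (A : Matrix (Fin k) (Fin l) ℝ) : Aᴴ = Aᵀ := by
  ext i j
  simp [conjTranspose_apply]

variable {A : Matrix (Fin k) (Fin k) ℝ}

lemma sqrt_transpose (hA : A.PosDef) : (hA.posSemidef.sqrt)ᵀ = hA.posSemidef.sqrt := by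
  have h := hA.posSemidef.sqrt_isHermitian
  rw [← real_conjTranspose]
  exact h

lemma sqrt_det_isUnit (hA : A.PosDef) : IsUnit (hA.posSemidef.sqrt).det := by
  have h := hA.posSemidef.sqrt_mul_self
  have hdet : (hA.posSemidef.sqrt).det * (hA.posSemidef.sqrt).det = A.det := by
    rw [← det_mul, h]
  have hpos := hA.det_pos
  refine isUnit_iff_ne_zero.2 fun h0 => ?_
  rw [h0, zero_mul] at hdet
  linarith

lemma sqrt_inv_mul_sqrt (hA : A.PosDef) : hA.posSemidef.sqrt⁻¹ * hA.posSemidef.sqrt = 1 :=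
  nonsing_inv_mul _ (sqrt_det_isUnit hA)

lemma sqrt_mul_sqrt_inv (hA : A.PosDef) : hA.posSemidef.sqrt * hA.posSemidef.sqrt⁻¹ = 1 :=
  mul_nonsing_inv _ (sqrt_det_isUnit hA)

lemma sqrt_inv_transpose (hA : A.PosDef) : (hA.posSemidef.sqrt⁻¹)ᵀ = hA.posSemidef.sqrt⁻¹ := by
  rw [transpose_nonsing_inv, sqrt_transpose hA]

lemma sqrt_inv_mul_sqrt_inv (hA : A.PosDef) :
    hA.posSemidef.sqrt⁻¹ * hA.posSemidef.sqrt⁻¹ = A⁻¹ := by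
  rw [← Matrix.mul_inv_rev, hA.posSemidef.sqrt_mul_self]

lemma mnorm_smul (M : Matrix (Fin k) (Fin k) ℝ) (c : ℝ) (x : Fin k → ℝ) :
    mnorm M (c • x) = |c| * mnorm M x := by
  rw [mnorm, mnorm, mulVec_smul, smul_dotProduct, dotProduct_smul, smul_eq_mul, smul_eq_mul,
    ← mul_assoc, ← pow_two, Real.sqrt_mul (sq_nonneg c), Real.sqrt_sq_eq_abs]

end MatAux


section Calc

lemma fderiv_component {d m : ℕ} (g : (Fin d → ℝ) → Fin m → ℝ) (hg : Differentiable ℝ g)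
    (x : Fin d → ℝ) (i : Fin m) :
    fderiv ℝ (fun y => g y i) x = (ContinuousLinearMap.proj i).comp (fderiv ℝ g x) := by
  have h1 : HasFDerivAt g (fderiv ℝ g x) x := (hg x).hasFDerivAt
  have h2 := (ContinuousLinearMap.proj (R := ℝ) (φ := fun _ : Fin m => ℝ) i).hasFDerivAt.comp x h1
  have hfun : (fun y => g y i) =
      (⇑(ContinuousLinearMap.proj (R := ℝ) (φ := fun _ : Fin m => ℝ) i) ∘ g) := rfl
  rw [hfun]
  exact h2.fderiv

lemma gradMat_mulVec {d m : ℕ} (g : (Fin d → ℝ) → Fin m → ℝ) (hg : Differentiable ℝ g)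
    (x h : Fin d → ℝ) :
    (gradMat d m g x).mulVec h = fderiv ℝ g x h := by
  funext i
  have h1 : (gradMat d m g x).mulVec h i = ∑ j, fderiv ℝ (fun y => g y i) x (Pi.single j 1) * h j :=
    rfl
  rw [h1]
  have h2 : h = ∑ j, h j • (Pi.single j 1 : Fin d → ℝ) := by
    rw [← Finset.univ_sum_single h]
    congr 1
    funext j
    funext k
    simp [Pi.single_apply, mul_ite]
  conv_rhs => rw [h2]
  rw [map_sum]
  have h3 : ∀ j, fderiv ℝ g x (h j • (Pi.single j 1 : Fin d → ℝ)) =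
      h j • fderiv ℝ g x (Pi.single j 1 : Fin d → ℝ) :=
    fun j => (fderiv ℝ g x).map_smul _ _
  simp only [h3]
  rw [Finset.sum_apply]
  congr 1
  funext j
  rw [fderiv_component g hg x i]
  simp [mul_comm]

lemma taylor_bound {d m : ℕ} (g : (Fin d → ℝ) → Fin m → ℝ) (hg : ContDiff ℝ 2 g)
    (xstar dl : Fin d → ℝ)
    (hstart : g xstar = 0) (hends : g (xstar + dl) = 0)
    (μ : Fin m → ℝ) (C : ℝ)
    (hbound : ∀ τ : ℝ, τ ∈ Set.Icc (0:ℝ) 1 →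
      μ ⬝ᵥ ((gradMat d m g (xstar + τ • dl) - gradMat d m g xstar).mulVec dl) ≤ C * τ) :
    -(μ ⬝ᵥ (gradMat d m g xstar).mulVec dl) ≤ C / 2 := by
  have hgd : Differentiable ℝ g := hg.differentiable (by norm_num)
  set ℓ : ℝ → (Fin d → ℝ) := fun τ => xstar + τ • dl with hℓ
  set F : ℝ → ℝ := fun τ => μ ⬝ᵥ (gradMat d m g (ℓ τ)).mulVec dl with hF
  set f : ℝ → ℝ := fun τ => μ ⬝ᵥ g (ℓ τ) with hf
  -- derivative
  have hderiv : ∀ τ : ℝ, HasDerivAt f (F τ) τ := by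
    intro τ
    have hline : HasDerivAt ℓ dl τ := by
      have h1 : HasDerivAt (fun τ : ℝ => τ • dl) ((1:ℝ) • dl) τ :=
        (hasDerivAt_id τ).smul_const dl
      rw [one_smul] at h1
      exact h1.const_add xstar
    have hgτ : HasFDerivAt g (fderiv ℝ g (ℓ τ)) (ℓ τ) := (hgd (ℓ τ)).hasFDerivAt
    have hcomp : HasDerivAt (g ∘ ℓ) (fderiv ℝ g (ℓ τ) dl) τ := hgτ.comp_hasDerivAt τ hline
    have hcomp' : ∀ i, HasDerivAt (fun s => g (ℓ s) i) (fderiv ℝ g (ℓ τ) dl i) τ :=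
      fun i => (hasDerivAt_pi.1 hcomp) i
    have hsum : HasDerivAt (fun s => ∑ i, μ i * g (ℓ s) i)
        (∑ i, μ i * fderiv ℝ g (ℓ τ) dl i) τ :=
      HasDerivAt.fun_sum (fun i _ => (hcomp' i).const_mul (μ i))
    have hfeq : f = fun s => ∑ i, μ i * g (ℓ s) i := rfl
    have hFeq : F τ = ∑ i, μ i * fderiv ℝ g (ℓ τ) dl i := by
      rw [hF]
      simp only []
      rw [gradMat_mulVec g hgd]
      rfl
    rw [hfeq, hFeq]
    exact hsum
  -- continuity of F
  have hFcont : Continuous F := by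
    have hℓc : Continuous ℓ := by
      apply continuous_const.add
      exact continuous_id.smul continuous_const
    have h1 : Continuous (fun τ => fderiv ℝ g (ℓ τ)) :=
      (hg.continuous_fderiv (by norm_num)).comp hℓc
    have h2 : Continuous (fun τ => fderiv ℝ g (ℓ τ) dl) :=
      ((ContinuousLinearMap.apply ℝ (Fin m → ℝ) dl).continuous).comp h1
    have h3 : F = fun τ => ∑ i, μ i * fderiv ℝ g (ℓ τ) dl i := by
      funext τ
      rw [hF]
      simp only []
      rw [gradMat_mulVec g hgd]
      rfl
    rw [h3]
    apply continuous_finset_sum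
    intro i _
    exact continuous_const.mul ((continuous_apply i).comp h2)
  -- FTC
  have hint : IntervalIntegrable F MeasureTheory.volume 0 1 :=
    hFcont.intervalIntegrable 0 1
  have hFTC : ∫ τ in (0:ℝ)..1, F τ = f 1 - f 0 :=
    intervalIntegral.integral_eq_sub_of_hasDerivAt (fun τ _ => hderiv τ) hint
  have hf1 : f 1 = 0 := by
    rw [hf]
    simp only [hℓ, one_smul]
    rw [hends]
    simp [dotProduct]
  have hf0 : f 0 = 0 := by
    rw [hf]
    simp only [hℓ, zero_smul, add_zero]
    rw [hstart]
    simp [dotProduct]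
  have hzero : ∫ τ in (0:ℝ)..1, F τ = 0 := by rw [hFTC, hf1, hf0, sub_zero]
  -- F 0 identification
  have hF0 : F 0 = μ ⬝ᵥ (gradMat d m g xstar).mulVec dl := by
    rw [hF]
    simp only [hℓ, zero_smul, add_zero]
  -- pointwise bound
  have hpt : ∀ τ ∈ Set.Icc (0:ℝ) 1, F τ - F 0 ≤ C * τ := by
    intro τ hτ
    have := hbound τ hτ
    have heq : F τ - F 0 = μ ⬝ᵥ ((gradMat d m g (ℓ τ) - gradMat d m g xstar).mulVec dl) := by
      rw [Matrix.sub_mulVec, dotProduct_sub, hF0]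
    rw [heq]
    exact this
  -- integral comparison
  have hmono : ∫ τ in (0:ℝ)..1, (F τ - F 0) ≤ ∫ τ in (0:ℝ)..1, C * τ := by
    apply intervalIntegral.integral_mono_on (by norm_num)
    · exact (hFcont.sub continuous_const).intervalIntegrable 0 1
    · exact (continuous_const.mul continuous_id).intervalIntegrable 0 1
    · exact hpt
  have hlhs : ∫ τ in (0:ℝ)..1, (F τ - F 0) = -(F 0) := by
    rw [intervalIntegral.integral_sub hint (intervalIntegrable_const)]
    rw [hzero, intervalIntegral.integral_const]
    simp
  have hrhs : ∫ τ in (0:ℝ)..1, C * τ = C / 2 := by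
    rw [intervalIntegral.integral_const_mul, integral_id]
    ring
  rw [hlhs, hrhs] at hmono
  rw [← hF0]
  exact hmono

end Calc


section MoreAux

variable {k : ℕ}

lemma mnorm_nonneg (M : Matrix (Fin k) (Fin k) ℝ) (x : Fin k → ℝ) : 0 ≤ mnorm M x :=
  Real.sqrt_nonneg _

lemma mnorm_zero (M : Matrix (Fin k) (Fin k) ℝ) : mnorm M 0 = 0 := by
  simp [mnorm]

lemma enorm_sub_le (x y : Fin k → ℝ) : enorm (x - y) ≤ enorm x + enorm y := by
  rw [sub_eq_add_neg]
  calc enorm (x + -y) ≤ enorm x + enorm (-y) := enorm_add_le x (-y)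
    _ = enorm x + enorm y := by rw [enorm_neg]

lemma enorm_sub_comm (x y : Fin k → ℝ) : enorm (x - y) = enorm (y - x) := by
  rw [← neg_sub, enorm_neg]

end MoreAux


section Arith

lemma arith1 {L t : ℝ} (h : L * t ≤ 1 / 3) (ht : 0 ≤ t) : L * t ^ 2 ≤ t / 3 := by nlinarith

lemma arith2 {L t Dz : ℝ} (hL : 0 < L)
    (h1 : Dz ≤ 1 / (12 * L) + (L * t ^ 2 / 2 + 1 / 4 * t) + (L * t) * Dz)
    (h2 : (L * t) * Dz ≤ 1 / 3 * Dz) (h3 : L * t ^ 2 ≤ t / 3) :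
    Dz ≤ 1 / (8 * L) + 5 / 8 * t := by
  have hLinv : (3 : ℝ) / 2 * (1 / (12 * L)) = 1 / (8 * L) := by
    field_simp
    ring
  linarith

lemma arith3 {L t Dz : ℝ} (hL : 0 < L) (ht : 0 ≤ t) (hDz : 0 ≤ Dz)
    (h5 : Dz ≤ 1 / (8 * L) + 5 / 8 * t) (h3 : L * t ^ 2 ≤ t / 3) :
    (L * t) * Dz ≤ t / 3 := by
  have h1 : (L * t) * Dz ≤ (L * t) * (1 / (8 * L) + 5 / 8 * t) :=
    mul_le_mul_of_nonneg_left h5 (mul_nonneg hL.le ht)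
  have h2 : (L * t) * (1 / (8 * L)) = t / 8 := by field_simp
  have h4 : (L * t) * (1 / (8 * L) + 5 / 8 * t) = t / 8 + 5 / 8 * (L * t ^ 2) := by
    rw [mul_add, h2]; ring
  rw [h4] at h1
  linarith

lemma arith4 {t x : ℝ} (htpos : 0 < t) (h : t ^ 2 ≤ t ^ 2 * (19 / 24) + t * x) :
    t ≤ 24 / 5 * x := by
  have h1 : 5 / 24 * t * t ≤ x * t := by nlinarith
  have h2 : 5 / 24 * t ≤ x := le_of_mul_le_mul_right h1 htpos
  linarith

lemma arith_T2n {L t Dz : ℝ} (ht0 : 0 ≤ t) (hLtDz : (L * t) * Dz ≤ t / 3) :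
    (L * t ^ 2 / 2) * Dz ≤ t ^ 2 / 6 := by
  have h2 : t * ((L * t) * Dz) ≤ t * (t / 3) := mul_le_mul_of_nonneg_left hLtDz ht0
  nlinarith

lemma arith_T3n {L t Dz : ℝ} (ht0 : 0 ≤ t) (hLtDz : (L * t) * Dz ≤ t / 3) :
    ((L * t) * t) * Dz ≤ t ^ 2 / 3 := by
  have h2 : t * ((L * t) * Dz) ≤ t * (t / 3) := mul_le_mul_of_nonneg_left hLtDz ht0
  nlinarith

lemma arith_tsq {t x : ℝ} (ht0 : 0 ≤ t) (h : t ≤ 24 / 5 * x) :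
    t ^ 2 ≤ (24 / 5) ^ 2 * x ^ 2 := by nlinarith

lemma arith_goal1 {X sC eps rC L t pnv qnv : ℝ}
    (h0 : X ≤ rC * pnv + sC * qnv) (hpn : pnv ≤ L * t ^ 2 / 2)
    (hr0 : 0 ≤ rC) (hs0 : 0 ≤ sC) (ht0 : 0 ≤ t) (heps0 : 0 ≤ eps)
    (hrLt : rC * (L * t) ≤ sC / 3)
    (hqn : qnv ≤ sC * eps + 7 / 12 * t)
    (ht245 : t ≤ 24 / 5 * (sC * eps)) :
    X ≤ 5 * sC ^ 2 * eps := by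
  have e1 : rC * pnv ≤ rC * (L * t ^ 2 / 2) := mul_le_mul_of_nonneg_left hpn hr0
  have e2 : rC * (L * t ^ 2 / 2) = (rC * (L * t)) * (t / 2) := by ring
  have e3 : (rC * (L * t)) * (t / 2) ≤ (sC / 3) * (t / 2) :=
    mul_le_mul_of_nonneg_right hrLt (by linarith)
  have e4 : sC * qnv ≤ sC * (sC * eps + 7 / 12 * t) := mul_le_mul_of_nonneg_left hqn hs0
  have e5 : sC * t ≤ sC * (24 / 5 * (sC * eps)) := mul_le_mul_of_nonneg_left ht245 hs0
  have hse2 : 0 ≤ sC ^ 2 * eps := mul_nonneg (sq_nonneg _) heps0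
  nlinarith [e1, e2, e3, e4, e5, h0, hse2]

lemma arith_goal2 {X sC eps t PuPa QuQa : ℝ}
    (hii : X ≤ PuPa + QuQa)
    (h1 : PuPa ≤ t ^ 2 / 24) (h2 : QuQa ≤ (sC * eps + 7 / 12 * t) * (sC * eps))
    (htsq : t ^ 2 ≤ (24 / 5) ^ 2 * (sC * eps) ^ 2) (hse : 0 ≤ sC * eps)
    (ht245 : t ≤ 24 / 5 * (sC * eps)) :
    X ≤ 5 * sC ^ 2 * eps ^ 2 := by
  have e : t * (sC * eps) ≤ 24 / 5 * ((sC * eps) * (sC * eps)) := by nlinarith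
  nlinarith [hii, h1, h2, htsq, e, hse]

end Arith

set_option maxHeartbeats 12000000 in
/-- curvature of constrained linear maximization (linear and quadratic perturbation bounds). -/
theorem constrained_curvature_bounds (d m : ℕ)
    (hd : 1 ≤ d) (hm : 1 ≤ m) (hmd : m ≤ d)
    (g : (Fin d → ℝ) → Fin m → ℝ) (hg : ContDiff ℝ 2 g)
    (hconv : ∀ i, ConvexOn ℝ Set.univ fun x => g x i)
    (wstar wv xstar xv : Fin d → ℝ)
    (hxstarAct : ∀ i, g xstar i = 0) (hxvAct : ∀ i, g xv i = 0)
    (hxstarMax : ∀ x : Fin d → ℝ, (∀ i, g x i ≤ 0) → x ⬝ᵥ wstar ≤ xstar ⬝ᵥ wstar)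
    (hxvMax : ∀ x : Fin d → ℝ, (∀ i, g x i ≤ 0) → x ⬝ᵥ wv ≤ xv ⬝ᵥ wv)
    (lamstar lamv : Fin m → ℝ)
    (hlamstar : ∀ i, 0 ≤ lamstar i) (hlamv : ∀ i, 0 ≤ lamv i)
    (hKKTstar : wstar = (gradMat d m g xstar)ᵀ.mulVec lamstar)
    (hKKTv : wv = (gradMat d m g xv)ᵀ.mulVec lamv)
    (hH : (Hmat d m g xstar lamstar).PosDef)
    (hW : (Wmat d m g xstar lamstar).PosDef)
    (L : ℝ) (hL : 0 < L)
    -- smoothness condition (Sm1)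
    (hSm1 : mnorm (Hmat d m g xstar lamstar)⁻¹
        ((gradMat d m g xv - gradMat d m g xstar)ᵀ.mulVec lamstar -
          (Hmat d m g xstar lamstar).mulVec (xv - xstar)) ≤
      1 / 4 * mnorm (Hmat d m g xstar lamstar) (xv - xstar))
    -- smoothness condition (Sm2)
    (hSm2 : ∀ x : Fin d → ℝ,
      opNorm (hW.posSemidef.sqrt⁻¹ * (gradMat d m g x - gradMat d m g xstar) *
          hH.posSemidef.sqrt⁻¹) ≤
        L * mnorm (Hmat d m g xstar lamstar) (x - xstar))
    (Sig : Matrix (Fin d) (Fin d) ℝ) (hSig : Sig.PosDef)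
    (hxclose : mnorm (Hmat d m g xstar lamstar) (xv - xstar) ≤
      opNorm ((((1 : Matrix (Fin d) (Fin d) ℝ) -
            PG d m g xstar lamstar hH.posSemidef) * hH.posSemidef.sqrt⁻¹) *
          hSig.posSemidef.sqrt⁻¹) /
        (3 * L * opNorm (hH.posSemidef.sqrt⁻¹ * hSig.posSemidef.sqrt⁻¹)))
    (hwclose : enorm ((PG d m g xstar lamstar hH.posSemidef).mulVec
        (hH.posSemidef.sqrt⁻¹.mulVec (wv - wstar))) ≤ 1 / (12 * L))
    (κ : ℝ)
    (hκ : κ = 5 / Real.sqrt d * mnorm Sig wstar *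
      opNorm ((((1 : Matrix (Fin d) (Fin d) ℝ) -
            PG d m g xstar lamstar hH.posSemidef) * hH.posSemidef.sqrt⁻¹) *
          hSig.posSemidef.sqrt⁻¹) ^ 2) :
    mnorm Sig⁻¹ (xv - xstar) ≤
        κ * Real.sqrt d * (mnorm Sig (wv - wstar) / mnorm Sig wstar) ∧
      wv ⬝ᵥ (xv - xstar) ≤
        κ * Real.sqrt d * mnorm Sig wstar *
          (mnorm Sig (wv - wstar) / mnorm Sig wstar) ^ 2 := by
  -- abbreviations
  set Hm := Hmat d m g xstar lamstar with hHm_def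
  set Gs := gradMat d m g xstar with hGs_def
  set Gv := gradMat d m g xv with hGv_def
  set Wm := Wmat d m g xstar lamstar with hWm_def
  set P := PG d m g xstar lamstar hH.posSemidef with hP_def
  set R := hH.posSemidef.sqrt with hR_def
  set S := R⁻¹ with hS_def
  set Ws := hW.posSemidef.sqrt with hWs_def
  set Wsi := Ws⁻¹ with hWsi_def
  set Sr := hSig.posSemidef.sqrt with hSr_def
  set Ss := Sr⁻¹ with hSs_def
  set dl := xv - xstar with hdl_def
  set sC := opNorm (((1 : Matrix (Fin d) (Fin d) ℝ) - P) * S * Ss) with hsC_def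
  set rC := opNorm (S * Ss) with hrC_def
  set nw := mnorm Sig wstar with hnw_def
  set eps := mnorm Sig (wv - wstar) with heps_def
  classical
  obtain ⟨u, hu⟩ : ∃ v, v = R.mulVec dl := ⟨_, rfl⟩
  set t := enorm u with ht_def
  obtain ⟨a, ha⟩ : ∃ v, v = S.mulVec (wv - wstar) := ⟨_, rfl⟩
  rw [← ha] at hwclose
  -- square-root facts
  have hRt : Rᵀ = R := sqrt_transpose hH
  have hRR : R * R = Hm := hH.posSemidef.sqrt_mul_self
  have hSR : S * R = 1 := sqrt_inv_mul_sqrt hH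
  have hRS : R * S = 1 := sqrt_mul_sqrt_inv hH
  have hSt : Sᵀ = S := sqrt_inv_transpose hH
  have hSS : S * S = Hm⁻¹ := sqrt_inv_mul_sqrt_inv hH
  have hWst : Wsᵀ = Ws := sqrt_transpose hW
  have hWsWs : Ws * Ws = Wm := hW.posSemidef.sqrt_mul_self
  have hWsiWs : Wsi * Ws = 1 := sqrt_inv_mul_sqrt hW
  have hWsWsi : Ws * Wsi = 1 := sqrt_mul_sqrt_inv hW
  have hWsit : Wsiᵀ = Wsi := sqrt_inv_transpose hW
  have hWsiWsi : Wsi * Wsi = Wm⁻¹ := sqrt_inv_mul_sqrt_inv hW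
  have hSrt : Srᵀ = Sr := sqrt_transpose hSig
  have hSrSr : Sr * Sr = Sig := hSig.posSemidef.sqrt_mul_self
  have hSst : Ssᵀ = Ss := sqrt_inv_transpose hSig
  have hSsSs : Ss * Ss = Sig⁻¹ := sqrt_inv_mul_sqrt_inv hSig
  have hSsSr : Ss * Sr = 1 := sqrt_inv_mul_sqrt hSig
  -- P, O facts
  have hWmdef : Wm = Gs * Hm⁻¹ * Gsᵀ := rfl
  have hPdef : P = S * Gsᵀ * Wm⁻¹ * Gs * S := rfl
  set O := Wsi * Gs * S with hO_def
  have hOt : Oᵀ = S * (Gsᵀ * Wsi) := by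
    rw [hO_def, transpose_mul, transpose_mul, hSt, hWsit]
  have hSS' : ∀ {p : ℕ} (X : Matrix (Fin d) (Fin p) ℝ), S * (S * X) = Hm⁻¹ * X := by
    intro p X; rw [← Matrix.mul_assoc, hSS]
  have hWsiWs' : ∀ {p : ℕ} (X : Matrix (Fin m) (Fin p) ℝ), Wsi * (Ws * X) = X := by
    intro p X; rw [← Matrix.mul_assoc, hWsiWs, Matrix.one_mul]
  have hWsWsi' : ∀ {p : ℕ} (X : Matrix (Fin m) (Fin p) ℝ), Ws * (Wsi * X) = X := by
    intro p X; rw [← Matrix.mul_assoc, hWsWsi, Matrix.one_mul]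
  have hWmX : ∀ {p : ℕ} (X : Matrix (Fin m) (Fin p) ℝ), Gs * (Hm⁻¹ * (Gsᵀ * X)) = Wm * X := by
    intro p X; rw [hWmdef]; simp only [Matrix.mul_assoc]
  have hOOt : O * Oᵀ = 1 := by
    rw [hOt, hO_def]
    simp only [Matrix.mul_assoc]
    rw [hSS', hWmX, ← hWsWs, Matrix.mul_assoc, hWsiWs', hWsWsi]
  have hOOt' : ∀ {p : ℕ} (X : Matrix (Fin m) (Fin p) ℝ), O * (Oᵀ * X) = X := by
    intro p X; rw [← Matrix.mul_assoc, hOOt, Matrix.one_mul]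
  have hPOO : P = Oᵀ * O := by
    rw [hPdef, hOt, hO_def, ← hWsiWsi]
    simp only [Matrix.mul_assoc]
  have hPt : Pᵀ = P := by
    rw [hPOO, transpose_mul, transpose_transpose]
  have hPP : P * P = P := by
    rw [hPOO]
    simp only [Matrix.mul_assoc]
    rw [hOOt']
  have hQt : ((1 : Matrix (Fin d) (Fin d) ℝ) - P)ᵀ = 1 - P := by
    rw [transpose_sub, transpose_one, hPt]
  have hQQ : ((1 : Matrix (Fin d) (Fin d) ℝ) - P) * (1 - P) = 1 - P := by
    rw [Matrix.sub_mul, Matrix.one_mul, Matrix.mul_sub, Matrix.mul_one, hPP]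
    abel
  have hQOt : ((1 : Matrix (Fin d) (Fin d) ℝ) - P) * Oᵀ = 0 := by
    rw [Matrix.sub_mul, Matrix.one_mul, hPOO, Matrix.mul_assoc, hOOt, Matrix.mul_one, sub_self]
  -- vector basics
  have hdlSu : S.mulVec u = dl := by
    rw [hu, mulVec_mulVec, hSR, one_mulVec]
  have hmnt : mnorm Hm dl = t := by
    rw [mnorm_eq_enorm hRt hRR dl, ← hu]
  have ht0 : (0:ℝ) ≤ t := enorm_nonneg' u
  have heps0 : (0:ℝ) ≤ eps := mnorm_nonneg _ _
  have hnwge : (0:ℝ) ≤ nw := mnorm_nonneg _ _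
  have hs0 : (0:ℝ) ≤ sC := opNorm_nonneg _
  have hr0 : (0:ℝ) ≤ rC := opNorm_nonneg _
  -- optimality
  have hopt : dl ⬝ᵥ wstar ≤ 0 := by
    have h1 := hxstarMax xv (fun i => le_of_eq (hxvAct i))
    rw [hdl_def, sub_dotProduct]
    linarith
  -- Taylor bound : the projected component of u is second order
  obtain ⟨yv, hyv⟩ : ∃ v, v = Gs.mulVec dl := ⟨_, rfl⟩
  have hOR : O * R = Wsi * Gs := by
    rw [hO_def]
    simp only [Matrix.mul_assoc]
    rw [hSR, Matrix.mul_one]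
  have hOu : O.mulVec u = Wsi.mulVec yv := by
    rw [hu, mulVec_mulVec, hOR, hyv, ← mulVec_mulVec]
  have hWsiyv : enorm (Wsi.mulVec yv) ≤ L * t ^ 2 / 2 := by
    have hkey : ∀ θ : Fin m → ℝ, -(θ ⬝ᵥ Wsi.mulVec yv) ≤ enorm θ * (L * t ^ 2) / 2 := by
      intro θ
      have hb : ∀ τ : ℝ, τ ∈ Set.Icc (0:ℝ) 1 →
          (Wsi.mulVec θ) ⬝ᵥ ((gradMat d m g (xstar + τ • dl) - Gs).mulVec dl) ≤
            (enorm θ * (L * t ^ 2)) * τ := by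
        intro τ hτ
        set Gτ := gradMat d m g (xstar + τ • dl) with hGτ_def
        have hm1 : Ws * (Wsi * (Gτ - Gs) * S) * R = Gτ - Gs := by
          simp only [Matrix.mul_assoc]
          rw [hSR, Matrix.mul_one, hWsWsi']
        have hmv : (Gτ - Gs).mulVec dl = Ws.mulVec ((Wsi * (Gτ - Gs) * S).mulVec u) := by
          calc (Gτ - Gs).mulVec dl = (Ws * (Wsi * (Gτ - Gs) * S) * R).mulVec dl := by rw [hm1]
            _ = Ws.mulVec ((Wsi * (Gτ - Gs) * S).mulVec (R.mulVec dl)) := by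
                rw [← mulVec_mulVec, ← mulVec_mulVec]
            _ = Ws.mulVec ((Wsi * (Gτ - Gs) * S).mulVec u) := by rw [← hu]
        have hdot : (Wsi.mulVec θ) ⬝ᵥ ((Gτ - Gs).mulVec dl) =
            θ ⬝ᵥ ((Wsi * (Gτ - Gs) * S).mulVec u) := by
          rw [hmv, dot_symm_mulVec hWst (Wsi.mulVec θ), mulVec_mulVec, hWsWsi, one_mulVec]
        have hsm2 := hSm2 (xstar + τ • dl)
        rw [← hHm_def, add_sub_cancel_left] at hsm2
        have hmn : mnorm Hm (τ • dl) = τ * t := by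
          rw [mnorm_smul, hmnt, abs_of_nonneg hτ.1]
        rw [hmn] at hsm2
        have hb1 : enorm ((Wsi * (Gτ - Gs) * S).mulVec u) ≤ (L * (τ * t)) * t := by
          calc enorm ((Wsi * (Gτ - Gs) * S).mulVec u) ≤
              opNorm (Wsi * (Gτ - Gs) * S) * enorm u := enorm_mulVec_le _ _
            _ ≤ (L * (τ * t)) * t := by
                apply mul_le_mul hsm2 (le_refl _) ht0
                exact mul_nonneg hL.le (mul_nonneg hτ.1 ht0)
        have hb2 : θ ⬝ᵥ ((Wsi * (Gτ - Gs) * S).mulVec u) ≤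
            enorm θ * ((L * (τ * t)) * t) := by
          calc θ ⬝ᵥ ((Wsi * (Gτ - Gs) * S).mulVec u) ≤
              enorm θ * enorm ((Wsi * (Gτ - Gs) * S).mulVec u) := dot_le_enorm_mul_enorm _ _
            _ ≤ enorm θ * ((L * (τ * t)) * t) := by
                apply mul_le_mul_of_nonneg_left hb1 (enorm_nonneg' θ)
        rw [hdot]
        calc θ ⬝ᵥ ((Wsi * (Gτ - Gs) * S).mulVec u) ≤ enorm θ * ((L * (τ * t)) * t) := hb2
          _ = (enorm θ * (L * t ^ 2)) * τ := by ring
      have hstart : g xstar = 0 := funext hxstarAct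
      have hends : g (xstar + dl) = 0 := by
        have hxx : xstar + dl = xv := by rw [hdl_def]; abel
        rw [hxx]
        exact funext hxvAct
      have htay := taylor_bound g hg xstar dl hstart hends (Wsi.mulVec θ)
        (enorm θ * (L * t ^ 2)) hb
      have hgs : (Wsi.mulVec θ) ⬝ᵥ (Gs.mulVec dl) = θ ⬝ᵥ (Wsi.mulVec yv) := by
        rw [hyv, dot_symm_mulVec hWsit θ]
      rw [← hGs_def] at htay
      rw [← hgs]
      linarith [htay]
    rcases eq_or_lt_of_le (enorm_nonneg' (Wsi.mulVec yv)) with h0 | hpos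
    · rw [← h0]; positivity
    · have h := hkey (-(Wsi.mulVec yv))
      rw [neg_dotProduct, neg_neg, enorm_neg] at h
      have hsq : Wsi.mulVec yv ⬝ᵥ Wsi.mulVec yv = enorm (Wsi.mulVec yv) ^ 2 :=
        (sq_enorm _).symm
      rw [hsq] at h
      nlinarith
  have hpn : enorm (P.mulVec u) ≤ L * t ^ 2 / 2 := by
    rw [← enorm_O_eq_enorm_P hPOO.symm hPt hPP u, hOu]
    exact hWsiyv
  -- Sm1 : error vector
  obtain ⟨vv, hvv⟩ : ∃ v, v = S.mulVec ((Gv - Gs)ᵀ.mulVec lamstar) := ⟨_, rfl⟩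
  have hSHm : S * Hm = R := by
    rw [← hRR, ← Matrix.mul_assoc, hSR, Matrix.one_mul]
  have hSHdl : S.mulVec (Hm.mulVec dl) = u := by
    rw [mulVec_mulVec, hSHm, ← hu]
  have hee : enorm (u - vv) ≤ 1 / 4 * t := by
    have h1 : mnorm Hm⁻¹ ((Gv - Gs)ᵀ.mulVec lamstar - Hm.mulVec dl) = enorm (vv - u) := by
      rw [mnorm_eq_enorm hSt hSS, Matrix.mulVec_sub, hSHdl, ← hvv]
    rw [enorm_sub_comm, ← h1]
    rw [hmnt] at hSm1
    exact hSm1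
  -- lambda difference
  obtain ⟨zeta, hzeta⟩ : ∃ v, v = Ws.mulVec (lamv - lamstar) := ⟨_, rfl⟩
  set Dz := enorm zeta with hDz_def
  have hDz0 : (0:ℝ) ≤ Dz := enorm_nonneg' _
  obtain ⟨zv, hzv⟩ : ∃ v, v = S.mulVec ((Gv - Gs)ᵀ.mulVec lamv) := ⟨_, rfl⟩
  have hOtWs : Oᵀ * Ws = S * Gsᵀ := by
    rw [hOt]
    simp only [Matrix.mul_assoc]
    rw [hWsiWs, Matrix.mul_one]
  have hOtz : Oᵀ.mulVec zeta = S.mulVec (Gsᵀ.mulVec (lamv - lamstar)) := by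
    rw [hzeta, mulVec_mulVec, hOtWs, ← mulVec_mulVec]
  have hvecid : Gvᵀ.mulVec lamv - Gsᵀ.mulVec lamstar =
      Gsᵀ.mulVec (lamv - lamstar) + (Gv - Gs)ᵀ.mulVec lamv := by
    simp only [Matrix.transpose_sub, Matrix.sub_mulVec, Matrix.mulVec_sub]
    abel
  have haz : a = Oᵀ.mulVec zeta + zv := by
    calc a = S.mulVec (Gvᵀ.mulVec lamv - Gsᵀ.mulVec lamstar) := by
          rw [ha, hKKTstar, hKKTv]
      _ = S.mulVec (Gsᵀ.mulVec (lamv - lamstar)) + S.mulVec ((Gv - Gs)ᵀ.mulVec lamv) := by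
          rw [hvecid, Matrix.mulVec_add]
      _ = Oᵀ.mulVec zeta + zv := by rw [hOtz, hzv]
  have hzeta_eq : zeta = O.mulVec a - O.mulVec zv := by
    have h2 : O.mulVec a = zeta + O.mulVec zv := by
      rw [haz, Matrix.mulVec_add, mulVec_mulVec, hOOt, one_mulVec]
    rw [h2]; abel
  set N := Wsi * (Gv - Gs) * S with hN_def
  have hNt : Nᵀ = S * ((Gv - Gs)ᵀ * Wsi) := by
    rw [hN_def, transpose_mul, transpose_mul, hSt, hWsit]
  have hNtWs : Nᵀ * Ws = S * (Gv - Gs)ᵀ := by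
    rw [hNt]
    simp only [Matrix.mul_assoc]
    rw [hWsiWs, Matrix.mul_one]
  have hzv_vv : zv - vv = Nᵀ.mulVec zeta := by
    calc zv - vv = S.mulVec ((Gv - Gs)ᵀ.mulVec lamv) - S.mulVec ((Gv - Gs)ᵀ.mulVec lamstar) := by
          rw [hzv, hvv]
      _ = S.mulVec ((Gv - Gs)ᵀ.mulVec (lamv - lamstar)) := by
          rw [Matrix.mulVec_sub, Matrix.mulVec_sub]
      _ = (S * (Gv - Gs)ᵀ).mulVec (lamv - lamstar) := by rw [mulVec_mulVec]
      _ = (Nᵀ * Ws).mulVec (lamv - lamstar) := by rw [hNtWs]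
      _ = Nᵀ.mulVec zeta := by rw [← mulVec_mulVec, ← hzeta]
  have hNop : opNorm N ≤ L * t := by
    have h := hSm2 xv
    rw [← hHm_def, ← hdl_def, hmnt] at h
    exact h
  -- master identity
  have hmaster_vec : (wv - wstar) + Gsᵀ.mulVec (lamstar - lamv) +
      (Gv - Gs)ᵀ.mulVec (lamstar - lamv) +
      (Hm.mulVec dl - (Gv - Gs)ᵀ.mulVec lamstar) = Hm.mulVec dl := by
    rw [hKKTstar, hKKTv]
    simp only [Matrix.transpose_sub, Matrix.sub_mulVec, Matrix.mulVec_sub]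
    abel
  have hT2conv : yv ⬝ᵥ (lamstar - lamv) = dl ⬝ᵥ Gsᵀ.mulVec (lamstar - lamv) := by
    rw [hyv, dot_transpose_mulVec]
  have hRtR : Rᵀ * R = Hm := by rw [hRt, hRR]
  have ht2 : t ^ 2 = dl ⬝ᵥ Hm.mulVec dl := by
    rw [ht_def, sq_enorm, hu]
    exact sq_enorm_proj hRtR dl
  have hmaster : t ^ 2 = dl ⬝ᵥ (wv - wstar) + yv ⬝ᵥ (lamstar - lamv) +
      dl ⬝ᵥ ((Gv - Gs)ᵀ.mulVec (lamstar - lamv)) +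
      dl ⬝ᵥ (Hm.mulVec dl - (Gv - Gs)ᵀ.mulVec lamstar) := by
    rw [ht2, hT2conv, ← dotProduct_add, ← dotProduct_add, ← dotProduct_add, hmaster_vec]
  -- projections of u and a
  obtain ⟨Pu, hPudef⟩ : ∃ v, v = P.mulVec u := ⟨_, rfl⟩
  obtain ⟨Qu, hQudef⟩ : ∃ v, v = ((1 : Matrix (Fin d) (Fin d) ℝ) - P).mulVec u := ⟨_, rfl⟩
  obtain ⟨Pa, hPadef⟩ : ∃ v, v = P.mulVec a := ⟨_, rfl⟩
  obtain ⟨Qa, hQadef⟩ : ∃ v, v = ((1 : Matrix (Fin d) (Fin d) ℝ) - P).mulVec a := ⟨_, rfl⟩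
  rw [← hPadef] at hwclose
  rw [← hPudef] at hpn
  have hQu_le_t : enorm Qu ≤ t := by
    rw [hQudef]; exact enorm_proj_le hQt hQQ u
  have hPuPa : u ⬝ᵥ P.mulVec a = Pu ⬝ᵥ Pa := by
    have h2 : P.mulVec (P.mulVec a) = P.mulVec a := by rw [mulVec_mulVec, hPP]
    calc u ⬝ᵥ P.mulVec a = u ⬝ᵥ P.mulVec (P.mulVec a) := by rw [h2]
      _ = P.mulVec u ⬝ᵥ P.mulVec a := dot_symm_mulVec hPt u _
      _ = Pu ⬝ᵥ Pa := by rw [← hPudef, ← hPadef]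
  have hQuQa : u ⬝ᵥ ((1 : Matrix (Fin d) (Fin d) ℝ) - P).mulVec a = Qu ⬝ᵥ Qa := by
    have h2 : ((1 : Matrix (Fin d) (Fin d) ℝ) - P).mulVec
        (((1 : Matrix (Fin d) (Fin d) ℝ) - P).mulVec a) = ((1 : Matrix (Fin d) (Fin d) ℝ) - P).mulVec a := by
      rw [mulVec_mulVec, hQQ]
    calc u ⬝ᵥ ((1 : Matrix (Fin d) (Fin d) ℝ) - P).mulVec a
        = u ⬝ᵥ ((1 : Matrix (Fin d) (Fin d) ℝ) - P).mulVec (((1 : Matrix (Fin d) (Fin d) ℝ) - P).mulVec a) := by rw [h2]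
      _ = ((1 : Matrix (Fin d) (Fin d) ℝ) - P).mulVec u ⬝ᵥ ((1 : Matrix (Fin d) (Fin d) ℝ) - P).mulVec a := dot_symm_mulVec hQt u _
      _ = Qu ⬝ᵥ Qa := by rw [← hQudef, ← hQadef]
  have hT1 : dl ⬝ᵥ (wv - wstar) = Pu ⬝ᵥ Pa + Qu ⬝ᵥ Qa := by
    have h0 : dl ⬝ᵥ (wv - wstar) = u ⬝ᵥ a := by
      calc dl ⬝ᵥ (wv - wstar) = S.mulVec u ⬝ᵥ (wv - wstar) := by rw [hdlSu]
        _ = u ⬝ᵥ S.mulVec (wv - wstar) := (dot_symm_mulVec hSt u _).symm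
        _ = u ⬝ᵥ a := by rw [← ha]
    have hsplit : u ⬝ᵥ a = u ⬝ᵥ P.mulVec a + u ⬝ᵥ ((1 : Matrix (Fin d) (Fin d) ℝ) - P).mulVec a := by
      rw [Matrix.sub_mulVec, Matrix.one_mulVec, dotProduct_sub]
      ring
    rw [h0, hsplit, hPuPa, hQuQa]
  -- norms of Qa
  have heps_eq : eps = enorm (Sr.mulVec (wv - wstar)) := by
    rw [heps_def]; exact mnorm_eq_enorm hSrt hSrSr _
  obtain ⟨w2, hw2⟩ : ∃ v, v = Sr.mulVec (wv - wstar) := ⟨_, rfl⟩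
  have hQa_le : enorm Qa ≤ sC * eps := by
    have hdw : wv - wstar = Ss.mulVec w2 := by
      rw [hw2, mulVec_mulVec, hSsSr, one_mulVec]
    have h1 : Qa = (((1 : Matrix (Fin d) (Fin d) ℝ) - P) * S * Ss).mulVec w2 := by
      rw [hQadef, ha, hdw, mulVec_mulVec, mulVec_mulVec]
    rw [h1, heps_eq, ← hw2]
    exact enorm_mulVec_le _ _
  -- T2, T3, T4 bounds
  have hT2b : yv ⬝ᵥ (lamstar - lamv) ≤ (L * t ^ 2 / 2) * Dz := by
    have hsub : lamstar - lamv = -(lamv - lamstar) := by abel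
    have h1 : yv ⬝ᵥ (lamstar - lamv) = Wsi.mulVec yv ⬝ᵥ (-zeta) := by
      calc yv ⬝ᵥ (lamstar - lamv) = Ws.mulVec (Wsi.mulVec yv) ⬝ᵥ (lamstar - lamv) := by
            rw [mulVec_mulVec, hWsWsi, one_mulVec]
        _ = Wsi.mulVec yv ⬝ᵥ Ws.mulVec (lamstar - lamv) := (dot_symm_mulVec hWst _ _).symm
        _ = Wsi.mulVec yv ⬝ᵥ (-zeta) := by
            rw [hsub, Matrix.mulVec_neg, hzeta]
    rw [h1]
    calc Wsi.mulVec yv ⬝ᵥ (-zeta) ≤ enorm (Wsi.mulVec yv) * enorm (-zeta) :=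
          dot_le_enorm_mul_enorm _ _
      _ = enorm (Wsi.mulVec yv) * Dz := by rw [enorm_neg, hDz_def]
      _ ≤ (L * t ^ 2 / 2) * Dz := mul_le_mul_of_nonneg_right hWsiyv hDz0
  have hm1' : Ws * N * R = Gv - Gs := by
    rw [hN_def]
    simp only [Matrix.mul_assoc]
    rw [hSR, Matrix.mul_one, hWsWsi']
  have hDGdl : (Gv - Gs).mulVec dl = Ws.mulVec (N.mulVec u) := by
    calc (Gv - Gs).mulVec dl = (Ws * N * R).mulVec dl := by rw [hm1']
      _ = Ws.mulVec (N.mulVec (R.mulVec dl)) := by rw [← mulVec_mulVec, ← mulVec_mulVec]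
      _ = Ws.mulVec (N.mulVec u) := by rw [← hu]
  have hNu_le : enorm (N.mulVec u) ≤ (L * t) * t := by
    calc enorm (N.mulVec u) ≤ opNorm N * enorm u := enorm_mulVec_le _ _
      _ ≤ (L * t) * t := by
          apply mul_le_mul hNop (le_refl _) ht0 (mul_nonneg hL.le ht0)
  have hT3b : dl ⬝ᵥ ((Gv - Gs)ᵀ.mulVec (lamstar - lamv)) ≤ ((L * t) * t) * Dz := by
    have hsub : lamstar - lamv = -(lamv - lamstar) := by abel
    have h1 : dl ⬝ᵥ ((Gv - Gs)ᵀ.mulVec (lamstar - lamv)) = N.mulVec u ⬝ᵥ (-zeta) := by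
      calc dl ⬝ᵥ ((Gv - Gs)ᵀ.mulVec (lamstar - lamv))
          = (Gv - Gs).mulVec dl ⬝ᵥ (lamstar - lamv) := dot_transpose_mulVec _ _ _
        _ = Ws.mulVec (N.mulVec u) ⬝ᵥ (lamstar - lamv) := by rw [hDGdl]
        _ = N.mulVec u ⬝ᵥ Ws.mulVec (lamstar - lamv) := (dot_symm_mulVec hWst _ _).symm
        _ = N.mulVec u ⬝ᵥ (-zeta) := by rw [hsub, Matrix.mulVec_neg, hzeta]
    rw [h1]
    calc N.mulVec u ⬝ᵥ (-zeta) ≤ enorm (N.mulVec u) * enorm (-zeta) :=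
          dot_le_enorm_mul_enorm _ _
      _ = enorm (N.mulVec u) * Dz := by rw [enorm_neg, hDz_def]
      _ ≤ ((L * t) * t) * Dz := mul_le_mul_of_nonneg_right hNu_le hDz0
  have hT4b : dl ⬝ᵥ (Hm.mulVec dl - (Gv - Gs)ᵀ.mulVec lamstar) ≤ (1 / 4 * t) * t := by
    have h1 : dl ⬝ᵥ (Hm.mulVec dl - (Gv - Gs)ᵀ.mulVec lamstar) = u ⬝ᵥ (u - vv) := by
      calc dl ⬝ᵥ (Hm.mulVec dl - (Gv - Gs)ᵀ.mulVec lamstar)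
          = S.mulVec u ⬝ᵥ (Hm.mulVec dl - (Gv - Gs)ᵀ.mulVec lamstar) := by rw [hdlSu]
        _ = u ⬝ᵥ S.mulVec (Hm.mulVec dl - (Gv - Gs)ᵀ.mulVec lamstar) :=
            (dot_symm_mulVec hSt u _).symm
        _ = u ⬝ᵥ (u - vv) := by rw [Matrix.mulVec_sub, hSHdl, ← hvv]
    rw [h1]
    calc u ⬝ᵥ (u - vv) ≤ enorm u * enorm (u - vv) := dot_le_enorm_mul_enorm _ _
      _ ≤ t * (1 / 4 * t) := mul_le_mul_of_nonneg_left hee ht0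
      _ = (1 / 4 * t) * t := by ring
  -- Dz bound
  have hOx : ∀ x : Fin d → ℝ, enorm (O.mulVec x) ≤ enorm x := by
    intro x
    rw [enorm_O_eq_enorm_P hPOO.symm hPt hPP x]
    exact enorm_proj_le hPt hPP x
  have hOv_le : enorm (O.mulVec vv) ≤ L * t ^ 2 / 2 + 1 / 4 * t := by
    have h1 : O.mulVec vv = O.mulVec u - O.mulVec (u - vv) := by
      rw [Matrix.mulVec_sub]
      abel
    rw [h1]
    calc enorm (O.mulVec u - O.mulVec (u - vv)) ≤
        enorm (O.mulVec u) + enorm (O.mulVec (u - vv)) := enorm_sub_le _ _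
      _ ≤ L * t ^ 2 / 2 + 1 / 4 * t := by
          apply add_le_add
          · rw [hOu]; exact hWsiyv
          · exact le_trans (hOx _) hee
  have hONz : enorm (O.mulVec ((Wsi * (Gv - Gs) * S)ᵀ.mulVec zeta)) ≤ (L * t) * Dz := by
    calc enorm (O.mulVec ((Wsi * (Gv - Gs) * S)ᵀ.mulVec zeta)) ≤
        enorm ((Wsi * (Gv - Gs) * S)ᵀ.mulVec zeta) := hOx _
      _ ≤ opNorm (Wsi * (Gv - Gs) * S) * enorm zeta := enorm_transpose_mulVec_le _ _
      _ ≤ (L * t) * Dz := by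
          rw [← hDz_def, ← hN_def]
          exact mul_le_mul_of_nonneg_right hNop hDz0
  have hDzb : Dz ≤ 1 / (12 * L) + (L * t ^ 2 / 2 + 1 / 4 * t) + (L * t) * Dz := by
    have hzveq : zv = vv + Nᵀ.mulVec zeta := by rw [← hzv_vv]; abel
    have hzeq : zeta = (O.mulVec a - O.mulVec vv) - O.mulVec (Nᵀ.mulVec zeta) := by
      calc zeta = O.mulVec a - O.mulVec zv := hzeta_eq
        _ = O.mulVec a - (O.mulVec vv + O.mulVec (Nᵀ.mulVec zeta)) := by
            rw [hzveq, Matrix.mulVec_add]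
        _ = (O.mulVec a - O.mulVec vv) - O.mulVec (Nᵀ.mulVec zeta) := by abel
    have hOa_le : enorm (O.mulVec a) ≤ 1 / (12 * L) := by
      rw [enorm_O_eq_enorm_P hPOO.symm hPt hPP a, ← hPadef]
      exact hwclose
    calc Dz = enorm ((O.mulVec a - O.mulVec vv) - O.mulVec (Nᵀ.mulVec zeta)) := by
          rw [hDz_def, ← hzeq]
      _ ≤ enorm (O.mulVec a - O.mulVec vv) + enorm (O.mulVec (Nᵀ.mulVec zeta)) :=
          enorm_sub_le _ _
      _ ≤ (enorm (O.mulVec a) + enorm (O.mulVec vv)) + (L * t) * Dz := by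
          apply add_le_add (enorm_sub_le _ _)
          rw [hN_def]
          exact hONz
      _ ≤ 1 / (12 * L) + (L * t ^ 2 / 2 + 1 / 4 * t) + (L * t) * Dz := by
          have := add_le_add hOa_le hOv_le
          linarith
  -- Qu decomposition
  have hQOz : ((1 : Matrix (Fin d) (Fin d) ℝ) - P).mulVec (Oᵀ.mulVec zeta) = 0 := by
    rw [mulVec_mulVec, hQOt, zero_mulVec]
  have hu4 : u = a - Oᵀ.mulVec zeta - Nᵀ.mulVec zeta + (u - vv) := by
    have h1 : vv = zv - Nᵀ.mulVec zeta := by rw [← hzv_vv]; abel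
    have h2 : zv = a - Oᵀ.mulVec zeta := by rw [haz]; abel
    rw [h1, h2]; abel
  have hQub : enorm Qu ≤ sC * eps + (L * t) * Dz + 1 / 4 * t := by
    have hdec : Qu = Qa - ((1 : Matrix (Fin d) (Fin d) ℝ) - P).mulVec (Nᵀ.mulVec zeta) +
        ((1 : Matrix (Fin d) (Fin d) ℝ) - P).mulVec (u - vv) := by
      rw [hQudef, hQadef]
      conv_lhs => rw [hu4]
      rw [Matrix.mulVec_add, Matrix.mulVec_sub, Matrix.mulVec_sub, hQOz]
      abel
    have hq1 : enorm (((1 : Matrix (Fin d) (Fin d) ℝ) - P).mulVec (Nᵀ.mulVec zeta)) ≤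
        (L * t) * Dz := by
      calc enorm (((1 : Matrix (Fin d) (Fin d) ℝ) - P).mulVec (Nᵀ.mulVec zeta)) ≤
          enorm (Nᵀ.mulVec zeta) := enorm_proj_le hQt hQQ _
        _ ≤ opNorm N * enorm zeta := enorm_transpose_mulVec_le _ _
        _ ≤ (L * t) * Dz := by
            rw [← hDz_def]
            exact mul_le_mul_of_nonneg_right hNop hDz0
    have hq2 : enorm (((1 : Matrix (Fin d) (Fin d) ℝ) - P).mulVec (u - vv)) ≤ 1 / 4 * t :=
      le_trans (enorm_proj_le hQt hQQ _) hee
    calc enorm Qu ≤ enorm (Qa - ((1 : Matrix (Fin d) (Fin d) ℝ) - P).mulVec (Nᵀ.mulVec zeta)) +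
          enorm (((1 : Matrix (Fin d) (Fin d) ℝ) - P).mulVec (u - vv)) := by
          rw [hdec]; exact enorm_add_le _ _
      _ ≤ (enorm Qa + enorm (((1 : Matrix (Fin d) (Fin d) ℝ) - P).mulVec (Nᵀ.mulVec zeta))) +
          1 / 4 * t := add_le_add (enorm_sub_le _ _) hq2
      _ ≤ sC * eps + (L * t) * Dz + 1 / 4 * t := by
          have := add_le_add hQa_le hq1
          linarith
  -- case split on t
  rcases eq_or_lt_of_le ht0 with ht00 | htpos
  · -- t = 0 : xv = xstar
    have hu0 : u = 0 := by
      apply enorm_eq_zero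
      rw [← ht_def]
      exact ht00.symm
    have hdl0 : dl = 0 := by rw [← hdlSu, hu0, mulVec_zero]
    have hκ0 : 0 ≤ κ := by
      rw [hκ]
      apply mul_nonneg (mul_nonneg _ hnwge) (sq_nonneg _)
      positivity
    constructor
    · rw [hdl0, mnorm_zero]
      exact mul_nonneg (mul_nonneg hκ0 (Real.sqrt_nonneg _)) (div_nonneg heps0 hnwge)
    · rw [hdl0, dotProduct_zero]
      exact mul_nonneg (mul_nonneg (mul_nonneg hκ0 (Real.sqrt_nonneg _)) hnwge) (sq_nonneg _)
  · -- t > 0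
    rcases eq_or_lt_of_le hnwge with hnw0 | hnwpos
    · -- nw = 0 forces wstar = 0, hence t = 0 : contradiction
      exfalso
      have hws0 : wstar = 0 := by
        by_contra hne
        have hpos2 := hSig.dotProduct_mulVec_pos hne
        have hstar : star wstar = wstar := by simp
        rw [hstar] at hpos2
        have h1 : Real.sqrt (wstar ⬝ᵥ Sig.mulVec wstar) = 0 := by
          have h1a : nw = Real.sqrt (wstar ⬝ᵥ Sig.mulVec wstar) := by rw [hnw_def, mnorm]
          rw [← h1a, ← hnw0]
        have h2 := Real.sqrt_eq_zero'.1 h1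
        linarith only [hpos2, h2]
      have hWsl0 : Ws.mulVec lamstar = 0 := by
        have hWstWs : Wsᵀ * Ws = Wm := by rw [hWst, hWsWs]
        have h1 : Ws.mulVec lamstar ⬝ᵥ Ws.mulVec lamstar = lamstar ⬝ᵥ Wm.mulVec lamstar :=
          sq_enorm_proj hWstWs lamstar
        have h2 : lamstar ⬝ᵥ Wm.mulVec lamstar = 0 := by
          have h3 : Wm.mulVec lamstar = Gs.mulVec (Hm⁻¹.mulVec (Gsᵀ.mulVec lamstar)) := by
            rw [hWmdef, ← mulVec_mulVec, ← mulVec_mulVec]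
          rw [h3, dot_mulVec_eq, ← hKKTstar, hws0]
          simp
        rw [h2] at h1
        apply enorm_eq_zero
        have h4 : enorm (Ws.mulVec lamstar) ^ 2 = 0 := by rw [sq_enorm, h1]
        exact pow_eq_zero_iff (n := 2) (by norm_num) |>.1 h4
      have hvv0 : vv = 0 := by
        rw [hvv, mulVec_mulVec, ← hNtWs, ← mulVec_mulVec, hWsl0, mulVec_zero]
      have hue : enorm (u - vv) ≤ 1 / 4 * t := hee
      rw [hvv0, sub_zero, ← ht_def] at hue
      linarith only [hue, htpos]
    · -- main case
      rw [hmnt] at hxclose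
      have hrpos : 0 < rC := by
        rcases eq_or_lt_of_le hr0 with h0 | h
        · exfalso
          rw [← h0] at hxclose
          simp only [mul_zero, div_zero] at hxclose
          linarith only [hxclose, htpos]
        · exact h
      have hden : 0 < 3 * L * rC := by positivity
      have htmul : t * (3 * L * rC) ≤ sC := (le_div_iff₀ hden).1 hxclose
      have hspos : 0 < sC := lt_of_lt_of_le (mul_pos htpos hden) htmul
      have hsler : sC ≤ rC := by
        apply opNorm_le_of_bound hr0
        intro x
        have h1 : (((1 : Matrix (Fin d) (Fin d) ℝ) - P) * S * Ss).mulVec x =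
            ((1 : Matrix (Fin d) (Fin d) ℝ) - P).mulVec ((S * Ss).mulVec x) := by
          rw [mulVec_mulVec]
          congr 1
          rw [Matrix.mul_assoc]
        rw [h1]
        calc enorm (((1 : Matrix (Fin d) (Fin d) ℝ) - P).mulVec ((S * Ss).mulVec x)) ≤
            enorm ((S * Ss).mulVec x) := enorm_proj_le hQt hQQ _
          _ ≤ rC * enorm x := by rw [hrC_def]; exact enorm_mulVec_le _ _
      have hrLt : rC * (L * t) ≤ sC / 3 := by
        have heq : rC * (L * t) = t * (3 * L * rC) / 3 := by ring
        rw [heq]; linarith only [htmul]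
      have hLt3 : L * t ≤ 1 / 3 := by
        have h1 : rC * (L * t) ≤ rC * (1 / 3) := by
          calc rC * (L * t) ≤ sC / 3 := hrLt
            _ ≤ rC / 3 := by linarith only [hsler]
            _ = rC * (1 / 3) := by ring
        exact le_of_mul_le_mul_left h1 hrpos
      have hA1 : L * t ^ 2 ≤ t / 3 := arith1 hLt3 ht0
      have hLDz13 : (L * t) * Dz ≤ 1 / 3 * Dz := mul_le_mul_of_nonneg_right hLt3 hDz0
      have hDz5 : Dz ≤ 1 / (8 * L) + 5 / 8 * t := arith2 hL hDzb hLDz13 hA1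
      have hLtDz : (L * t) * Dz ≤ t / 3 := arith3 hL ht0 hDz0 hDz5 hA1
      have hPuPa_le : Pu ⬝ᵥ Pa ≤ t ^ 2 / 24 := by
        have h1 : Pu ⬝ᵥ Pa ≤ enorm Pu * enorm Pa := dot_le_enorm_mul_enorm _ _
        have h2 : enorm Pu * enorm Pa ≤ (L * t ^ 2 / 2) * (1 / (12 * L)) := by
          apply mul_le_mul hpn hwclose (enorm_nonneg' _) (by positivity)
        have h3 : (L * t ^ 2 / 2) * (1 / (12 * L)) = t ^ 2 / 24 := by
          field_simp
          ring
        linarith only [h1, h2, h3]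
      have hQuQa_le : Qu ⬝ᵥ Qa ≤ t * (sC * eps) := by
        have h1 : Qu ⬝ᵥ Qa ≤ enorm Qu * enorm Qa := dot_le_enorm_mul_enorm _ _
        have h2 : enorm Qu * enorm Qa ≤ t * (sC * eps) :=
          mul_le_mul hQu_le_t hQa_le (enorm_nonneg' _) ht0
        linarith only [h1, h2]
      have hT2n : (L * t ^ 2 / 2) * Dz ≤ t ^ 2 / 6 := arith_T2n ht0 hLtDz
      have hT3n : ((L * t) * t) * Dz ≤ t ^ 2 / 3 := arith_T3n ht0 hLtDz
      have hT4n : (1 / 4 * t) * t = t ^ 2 / 4 := by ring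
      have hmaster_num : t ^ 2 ≤ t ^ 2 * (19 / 24) + t * (sC * eps) := by
        linarith only [hmaster, hT1, hPuPa_le, hQuQa_le, hT2b, hT3b, hT4b, hT2n, hT3n, hT4n]
      have ht245 : t ≤ 24 / 5 * (sC * eps) := arith4 htpos hmaster_num
      have hQu712 : enorm Qu ≤ sC * eps + 7 / 12 * t := by linarith only [hQub, hLtDz]
      have hd1 : (1 : ℝ) ≤ (d : ℝ) := by exact_mod_cast hd
      have hsd : (0 : ℝ) < Real.sqrt d := Real.sqrt_pos.2 (by linarith)
      have hnwne : nw ≠ 0 := ne_of_gt hnwpos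
      have hsdne : Real.sqrt d ≠ 0 := ne_of_gt hsd
      have hRHS1 : κ * Real.sqrt d * (eps / nw) = 5 * sC ^ 2 * eps := by
        rw [hκ]
        field_simp
      have hRHS2 : κ * Real.sqrt d * nw * (eps / nw) ^ 2 = 5 * sC ^ 2 * eps ^ 2 := by
        rw [hκ]
        field_simp
      constructor
      · rw [hRHS1]
        have hmdl : mnorm Sig⁻¹ dl = enorm (Ss.mulVec dl) := mnorm_eq_enorm hSst hSsSs dl
        have huPQ : u = P.mulVec u + ((1 : Matrix (Fin d) (Fin d) ℝ) - P).mulVec u := by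
          rw [Matrix.sub_mulVec, Matrix.one_mulVec]
          abel
        have hdl2 : dl = S.mulVec Pu + S.mulVec Qu := by
          rw [← hdlSu, hPudef, hQudef, ← Matrix.mulVec_add, ← huPQ]
        have hterm1 : enorm (Ss.mulVec (S.mulVec Pu)) ≤ rC * enorm Pu := by
          have h1 : Ss.mulVec (S.mulVec Pu) = (S * Ss)ᵀ.mulVec Pu := by
            rw [mulVec_mulVec]
            congr 1
            rw [transpose_mul, hSt, hSst]
          rw [h1, hrC_def]
          exact enorm_transpose_mulVec_le _ _
        have hQuQ : ((1 : Matrix (Fin d) (Fin d) ℝ) - P).mulVec Qu = Qu := by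
          rw [hQudef, mulVec_mulVec, hQQ]
        have hterm2 : enorm (Ss.mulVec (S.mulVec Qu)) ≤ sC * enorm Qu := by
          have h1 : Ss.mulVec (S.mulVec Qu) =
              (((1 : Matrix (Fin d) (Fin d) ℝ) - P) * S * Ss)ᵀ.mulVec Qu := by
            conv_lhs => rw [← hQuQ]
            rw [mulVec_mulVec, mulVec_mulVec]
            congr 1
            rw [transpose_mul, transpose_mul, hSt, hSst, hQt, ← Matrix.mul_assoc]
          rw [h1, hsC_def]
          exact enorm_transpose_mulVec_le _ _
        have hfinal : enorm (Ss.mulVec dl) ≤ rC * enorm Pu + sC * enorm Qu := by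
          rw [hdl2, Matrix.mulVec_add]
          calc enorm (Ss.mulVec (S.mulVec Pu) + Ss.mulVec (S.mulVec Qu)) ≤
              enorm (Ss.mulVec (S.mulVec Pu)) + enorm (Ss.mulVec (S.mulVec Qu)) :=
                enorm_add_le _ _
            _ ≤ rC * enorm Pu + sC * enorm Qu := add_le_add hterm1 hterm2
        rw [hmdl]
        exact arith_goal1 hfinal hpn hr0 hs0 ht0 heps0 hrLt hQu712 ht245
      · rw [hRHS2]
        have hii1 : wv ⬝ᵥ dl = dl ⬝ᵥ wstar + dl ⬝ᵥ (wv - wstar) := by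
          rw [dotProduct_comm, dotProduct_sub]
          ring
        have hQuQa2 : Qu ⬝ᵥ Qa ≤ (sC * eps + 7 / 12 * t) * (sC * eps) := by
          calc Qu ⬝ᵥ Qa ≤ enorm Qu * enorm Qa := dot_le_enorm_mul_enorm _ _
            _ ≤ (sC * eps + 7 / 12 * t) * (sC * eps) := by
                apply mul_le_mul hQu712 hQa_le (enorm_nonneg' _)
                exact add_nonneg (mul_nonneg hs0 heps0) (mul_nonneg (by norm_num) ht0)
        have htsq : t ^ 2 ≤ (24 / 5) ^ 2 * (sC * eps) ^ 2 := arith_tsq ht0 ht245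
        have hse0 : 0 ≤ sC * eps := mul_nonneg hs0 heps0
        have hiile : wv ⬝ᵥ dl ≤ Pu ⬝ᵥ Pa + Qu ⬝ᵥ Qa := by
          have heq2 : wv ⬝ᵥ dl = dl ⬝ᵥ wstar + (Pu ⬝ᵥ Pa + Qu ⬝ᵥ Qa) := by
            rw [hii1, hT1]
          linarith only [heq2, hopt]
        exact arith_goal2 hiile hPuPa_le hQuQa2 htsq hse0 ht245

end ConstrainedCurvature
end
end

section
/- Curvature bounds for maximization over a disk in the plane: Let ρ ∈ (0, 1/2], let Σ be a 2 × 2 positive definite real matrix with (1/4)·I ≼ Σ ≼ I, and let w, w* ∈ ℝ² be nonzero vectors with ‖w − w*‖_2 ≤ ‖w*‖_2. Set a = ρ w/‖w‖_2, a* = ρ w*/‖w*‖_2 (the maximizers of ⟨w, ·⟩ and ⟨w*, ·⟩ over the centered disk of radius ρ), and κ = 16√2 ρ. Then: (i) ‖a − a*‖_{Σ^{−1}} ≤ κ √2 · ‖w − w*‖_Σ / ‖w*‖_Σ; and (ii) |⟨w, a − a*⟩| ≤ κ √2 · ‖w*‖_Σ · (‖w − w*‖_Σ / ‖w*‖_Σ)².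 -/
open Matrix

noncomputable section

namespace DiskCurvature

/-- The norm `‖x‖_M = (xᵀ M x)^{1/2}` induced by a (positive definite) matrix `M`. -/
def mnorm (M : Matrix (Fin 2) (Fin 2) ℝ) (x : Fin 2 → ℝ) : ℝ :=
  Real.sqrt (x ⬝ᵥ M.mulVec x)

/-- The Euclidean norm on `ℝ²`. -/
def enorm (x : Fin 2 → ℝ) : ℝ :=
  Real.sqrt (∑ j, x j ^ 2)

lemma enorm_nonneg (x : Fin 2 → ℝ) : 0 ≤ enorm x := Real.sqrt_nonneg _

lemma mnorm_nonneg (M : Matrix (Fin 2) (Fin 2) ℝ) (x : Fin 2 → ℝ) : 0 ≤ mnorm M x :=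
  Real.sqrt_nonneg _

lemma enorm_sq (x : Fin 2 → ℝ) : enorm x ^ 2 = x 0 ^ 2 + x 1 ^ 2 := by
  rw [enorm, Real.sq_sqrt (by positivity)]
  simp [Fin.sum_univ_two]

lemma enorm_pos {x : Fin 2 → ℝ} (hx : x ≠ 0) : 0 < enorm x := by
  rw [enorm]
  apply Real.sqrt_pos.2
  rw [Fin.sum_univ_two]
  have h : x 0 ≠ 0 ∨ x 1 ≠ 0 := by
    by_contra h
    push_neg at h
    exact hx (funext fun j => by fin_cases j <;> simp [h.1, h.2])
  rcases h with h | h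
  · have : 0 < x 0 ^ 2 := by positivity
    nlinarith [sq_nonneg (x 1)]
  · have : 0 < x 1 ^ 2 := by positivity
    nlinarith [sq_nonneg (x 0)]

lemma enorm_smul (c : ℝ) (x : Fin 2 → ℝ) : enorm (c • x) = |c| * enorm x := by
  rw [enorm, enorm, show ∑ j, (c • x) j ^ 2 = c ^ 2 * ∑ j, x j ^ 2 by
      simp [Fin.sum_univ_two]; ring,
    Real.sqrt_mul (sq_nonneg c), Real.sqrt_sq_eq_abs]

lemma dot_le (x y : Fin 2 → ℝ) : x ⬝ᵥ y ≤ enorm x * enorm y := by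
  have hx := enorm_sq x
  have hy := enorm_sq y
  have hx0 := enorm_nonneg x
  have hy0 := enorm_nonneg y
  have hdot : x ⬝ᵥ y = x 0 * y 0 + x 1 * y 1 := by
    simp [dotProduct, Fin.sum_univ_two]
  rw [hdot]
  nlinarith [sq_nonneg (x 0 * y 1 - x 1 * y 0), mul_nonneg hx0 hy0,
    sq_nonneg (enorm x * enorm y - (x 0 * y 0 + x 1 * y 1)),
    sq_nonneg (enorm x * enorm y + (x 0 * y 0 + x 1 * y 1))]

lemma quad_lower {Sig : Matrix (Fin 2) (Fin 2) ℝ}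
    (hlow : (Sig - (1 / 4 : ℝ) • (1 : Matrix (Fin 2) (Fin 2) ℝ)).PosSemidef)
    (x : Fin 2 → ℝ) : (1/4) * (x ⬝ᵥ x) ≤ x ⬝ᵥ Sig.mulVec x := by
  have h := hlow.dotProduct_mulVec_nonneg x
  simp only [Matrix.sub_mulVec, Matrix.smul_mulVec, Matrix.one_mulVec,
    dotProduct_sub, dotProduct_smul, star_trivial, smul_eq_mul] at h
  linarith

lemma quad_upper {Sig : Matrix (Fin 2) (Fin 2) ℝ}
    (hup : ((1 : Matrix (Fin 2) (Fin 2) ℝ) - Sig).PosSemidef)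
    (x : Fin 2 → ℝ) : x ⬝ᵥ Sig.mulVec x ≤ x ⬝ᵥ x := by
  have h := hup.dotProduct_mulVec_nonneg x
  simp only [Matrix.sub_mulVec, Matrix.one_mulVec, dotProduct_sub, star_trivial] at h
  linarith

lemma dot_self_eq (x : Fin 2 → ℝ) : x ⬝ᵥ x = enorm x ^ 2 := by
  rw [enorm_sq]
  simp [dotProduct, Fin.sum_univ_two]; ring

lemma dot_symm {Sig : Matrix (Fin 2) (Fin 2) ℝ} (hSig : Sig.PosDef) (x y : Fin 2 → ℝ) :
    x ⬝ᵥ Sig.mulVec y = (Sig.mulVec x) ⬝ᵥ y := by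
  have hsymm : Sigᵀ = Sig := by
    have := hSig.1
    rw [Matrix.IsHermitian, Matrix.conjTranspose_eq_transpose_of_trivial] at this; simpa using this
  rw [Matrix.dotProduct_mulVec, ← Matrix.vecMul_transpose, hsymm]

lemma mnorm_sq {Sig : Matrix (Fin 2) (Fin 2) ℝ}
    (hlow : (Sig - (1 / 4 : ℝ) • (1 : Matrix (Fin 2) (Fin 2) ℝ)).PosSemidef)
    (x : Fin 2 → ℝ) : mnorm Sig x ^ 2 = x ⬝ᵥ Sig.mulVec x := by
  have h1 := quad_lower hlow x
  have h2 : (0:ℝ) ≤ x ⬝ᵥ x := by rw [dot_self_eq]; positivity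
  rw [mnorm, Real.sq_sqrt (by linarith)]

lemma mnorm_inv_le {Sig : Matrix (Fin 2) (Fin 2) ℝ} (hSig : Sig.PosDef)
    (hlow : (Sig - (1 / 4 : ℝ) • (1 : Matrix (Fin 2) (Fin 2) ℝ)).PosSemidef)
    (x : Fin 2 → ℝ) : mnorm Sig⁻¹ x ≤ 2 * enorm x := by
  set y := Sig⁻¹.mulVec x with hy
  have hxy : Sig.mulVec y = x := by
    rw [hy, Matrix.mulVec_mulVec, Matrix.mul_nonsing_inv _ (isUnit_iff_ne_zero.2 hSig.det_pos.ne'),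
      Matrix.one_mulVec]
  have hq : x ⬝ᵥ Sig⁻¹.mulVec x = y ⬝ᵥ Sig.mulVec y := by
    rw [← hy, ← hxy, dot_symm hSig, hxy, dotProduct_comm]
  set q := y ⬝ᵥ Sig.mulVec y with hqdef
  have h1 : (1/4) * (y ⬝ᵥ y) ≤ q := quad_lower hlow y
  have h2 : q = x ⬝ᵥ y := by rw [hqdef, dot_symm hSig y y, hxy, dotProduct_comm]
  have h3 : x ⬝ᵥ y ≤ enorm x * enorm y := dot_le x y
  have hyy : y ⬝ᵥ y = enorm y ^ 2 := dot_self_eq y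
  have hny := enorm_nonneg y
  have hnx := enorm_nonneg x
  have hqle : q ≤ 4 * enorm x ^ 2 := by nlinarith [sq_nonneg (enorm y - 4 * enorm x)]
  have hle : mnorm Sig⁻¹ x ≤ Real.sqrt (4 * enorm x ^ 2) := by
    rw [mnorm, hq]
    exact Real.sqrt_le_sqrt hqle
  calc mnorm Sig⁻¹ x ≤ Real.sqrt (4 * enorm x ^ 2) := hle
    _ = 2 * enorm x := by
        rw [show 4 * enorm x ^ 2 = (2 * enorm x)^2 by ring, Real.sqrt_sq (by positivity)]


lemma le_of_sq_le_sq {a b : ℝ} (hb : 0 ≤ b) (h : a ^ 2 ≤ b ^ 2) : a ≤ b := by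
  nlinarith [sq_nonneg (a - b), sq_nonneg (a + b)]

lemma key_ineq {N S D : ℝ} (hN : 0 < N) (hS : 0 < S) (hD : 0 ≤ D)
    (hDS : D ≤ S) (hNS : (N - S) ^ 2 ≤ D ^ 2) :
    S * (D ^ 2 - (N - S) ^ 2) ≤ 4 * N * D ^ 2 := by
  rcases le_or_gt S (4 * N) with h | h
  · nlinarith [mul_le_mul_of_nonneg_right h (sq_nonneg D),
      mul_nonneg hS.le (sq_nonneg (N - S))]
  · have hSN : 0 ≤ S - N := by linarith
    have hDge : S - N ≤ D := by nlinarith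
    have hA34 : 3 * S / 4 ≤ S - N := by linarith
    have hD34 : 3 * S / 4 ≤ D := le_trans hA34 hDge
    have p1 : 0 ≤ S * (N - (D - (S - N))) * (D + (S - N)) :=
      mul_nonneg (mul_nonneg hS.le (by linarith)) (by linarith)
    have p2 : 0 ≤ S * N * (2 * S - (D + (S - N))) :=
      mul_nonneg (mul_nonneg hS.le hN.le) (by linarith)
    have p3 : (3 * S / 4) * (3 * S / 4) ≤ D * D :=
      mul_le_mul hD34 hD34 (by linarith) hD
    have p4 : N * ((3 * S / 4) * (3 * S / 4)) ≤ N * (D * D) :=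
      mul_le_mul_of_nonneg_left p3 hN.le
    nlinarith [p1, p2, p4, mul_nonneg (mul_nonneg hN.le hS.le) hS.le]

lemma U_sq_le {U N S D P : ℝ} (hN : 0 < N)
    (hU2 : U ^ 2 = 2 * N ^ 2 * S ^ 2 - 2 * N * S * P)
    (hD2 : D ^ 2 = N ^ 2 - 2 * P + S ^ 2)
    (hkey : S * (D ^ 2 - (N - S) ^ 2) ≤ 4 * N * D ^ 2) :
    U ^ 2 ≤ (2 * N * D) ^ 2 := by
  nlinarith [mul_le_mul_of_nonneg_left hkey hN.le]

lemma final_i {ρ D S md ms : ℝ} (hρ : 0 < ρ) (hS : 0 < S) (hms : 0 < ms)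
    (hD : 0 ≤ D) (hmd : 0 ≤ md) (hDmd : D ≤ 2 * md) (hmsS : ms ≤ S) :
    4 * ρ * D / S ≤ 32 * ρ * (md / ms) := by
  rw [div_le_iff₀ hS, show 32 * ρ * (md / ms) * S = 32 * ρ * md * S / ms by ring,
    le_div_iff₀ hms]
  nlinarith [mul_le_mul hDmd hmsS hms.le (by positivity : (0:ℝ) ≤ 2 * md),
    mul_nonneg (mul_nonneg hρ.le hmd) hS.le]

lemma final_ii {ρ N S D P V md ms : ℝ} (hρ : 0 < ρ) (hN : 0 < N) (hS : 0 < S)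
    (hms : 0 < ms) (hD : 0 ≤ D) (hmd : 0 ≤ md)
    (hVS : V * S = ρ * N * S - ρ * P)
    (hD2 : D ^ 2 = N ^ 2 - 2 * P + S ^ 2)
    (hPle : P ≤ N * S) (hDmd : D ≤ 2 * md) (hmsS : ms ≤ S) :
    |V| ≤ 32 * ρ * md ^ 2 / ms := by
  have hV0 : 0 ≤ V := by
    have h : 0 ≤ V * S := by nlinarith
    nlinarith
  rw [abs_of_nonneg hV0, le_div_iff₀ hms]
  have h1 : V * S ≤ ρ * D ^ 2 / 2 := by
    nlinarith [mul_nonneg hρ.le (sq_nonneg (N - S))]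
  have h2 : V * ms ≤ V * S := mul_le_mul_of_nonneg_left hmsS hV0
  have h3 : ρ * D ^ 2 / 2 ≤ 2 * ρ * md ^ 2 := by
    nlinarith [mul_le_mul hDmd hDmd hD (by positivity : (0:ℝ) ≤ 2 * md)]
  nlinarith [mul_nonneg (mul_nonneg hρ.le hmd) hmd]


set_option maxHeartbeats 1000000 in
/-- curvature bounds for maximization over a disk in the plane.
Here `a = ρ w/‖w‖₂` and `a* = ρ w*/‖w*‖₂` are the maximizers of `⟨w, ·⟩` and
`⟨w*, ·⟩` over the centered disk of radius `ρ`, and `κ = 16√2 ρ`. -/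
theorem disk_curvature_bounds
    (ρ : ℝ) (hρpos : 0 < ρ) (hρle : ρ ≤ 1 / 2)
    (Sig : Matrix (Fin 2) (Fin 2) ℝ) (hSig : Sig.PosDef)
    (hlow : (Sig - (1 / 4 : ℝ) • (1 : Matrix (Fin 2) (Fin 2) ℝ)).PosSemidef)
    (hup : ((1 : Matrix (Fin 2) (Fin 2) ℝ) - Sig).PosSemidef)
    (w wstar : Fin 2 → ℝ) (hw : w ≠ 0) (hwstar : wstar ≠ 0)
    (hclose : enorm (w - wstar) ≤ enorm wstar)
    (a astar : Fin 2 → ℝ) (ha : a = (ρ / enorm w) • w)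
    (hastar : astar = (ρ / enorm wstar) • wstar)
    (κ : ℝ) (hκ : κ = 16 * Real.sqrt 2 * ρ) :
    mnorm Sig⁻¹ (a - astar) ≤
        κ * Real.sqrt 2 * (mnorm Sig (w - wstar) / mnorm Sig wstar) ∧
      |w ⬝ᵥ (a - astar)| ≤
        κ * Real.sqrt 2 * mnorm Sig wstar *
          (mnorm Sig (w - wstar) / mnorm Sig wstar) ^ 2 := by
  have hκ2 : κ * Real.sqrt 2 = 32 * ρ := by
    rw [hκ]
    have h2 : Real.sqrt 2 * Real.sqrt 2 = 2 := Real.mul_self_sqrt (by norm_num)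
    linear_combination 16 * ρ * h2
  set N := enorm w with hNdef
  set S := enorm wstar with hSdef
  set D := enorm (w - wstar) with hDdef
  set P := w ⬝ᵥ wstar with hPdef
  have hNpos : 0 < N := enorm_pos hw
  have hSpos : 0 < S := enorm_pos hwstar
  have hD0 : 0 ≤ D := enorm_nonneg _
  have hN2 : N ^ 2 = w 0 ^ 2 + w 1 ^ 2 := enorm_sq w
  have hS2 : S ^ 2 = wstar 0 ^ 2 + wstar 1 ^ 2 := enorm_sq wstar
  have hPc : P = w 0 * wstar 0 + w 1 * wstar 1 := by
    rw [hPdef]; simp [dotProduct, Fin.sum_univ_two]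
  have hD2 : D ^ 2 = N ^ 2 - 2 * P + S ^ 2 := by
    have h := enorm_sq (w - wstar)
    rw [← hDdef] at h
    simp only [Pi.sub_apply] at h
    rw [h, hN2, hS2, hPc]; ring
  have hPle : P ≤ N * S := by
    have h := dot_le w wstar
    rwa [← hPdef, ← hNdef, ← hSdef] at h
  -- Σ-norm facts
  set md := mnorm Sig (w - wstar) with hmddef
  set ms := mnorm Sig wstar with hmsdef
  have hmd0 : 0 ≤ md := mnorm_nonneg _ _
  have hms0 : 0 ≤ ms := mnorm_nonneg _ _
  have hmd2 : md ^ 2 = (w - wstar) ⬝ᵥ Sig.mulVec (w - wstar) := mnorm_sq hlow _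
  have hms2 : ms ^ 2 = wstar ⬝ᵥ Sig.mulVec wstar := mnorm_sq hlow _
  have hDmd : D ≤ 2 * md := by
    have h1 := quad_lower hlow (w - wstar)
    have h2 : (w - wstar) ⬝ᵥ (w - wstar) = D ^ 2 := by rw [dot_self_eq, hDdef]
    refine le_of_sq_le_sq (by linarith only [hmd0]) ?_
    rw [show (2 * md) ^ 2 = 4 * md ^ 2 by ring, hmd2]
    linarith only [h1, h2, hmd2]
  have hmsS : ms ≤ S := by
    have h1 := quad_upper hup wstar
    have h2 : wstar ⬝ᵥ wstar = S ^ 2 := by rw [dot_self_eq, hSdef]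
    refine le_of_sq_le_sq hSpos.le ?_
    rw [hms2]
    linarith only [h1, h2]
  have hmspos : 0 < ms := by
    have h1 := quad_lower hlow wstar
    have h2 : wstar ⬝ᵥ wstar = S ^ 2 := by rw [dot_self_eq, hSdef]
    rcases hms0.lt_or_eq with h | h
    · exact h
    · exfalso
      have : ms ^ 2 = 0 := by rw [← h]; ring
      rw [hms2] at this
      nlinarith only [h1, h2, this, hSpos]
  -- key scalar inequality
  have hNS_abs : (N - S) ^ 2 ≤ D ^ 2 := by nlinarith only [hD2, hPle]
  have hkey : S * (D ^ 2 - (N - S) ^ 2) ≤ 4 * N * D ^ 2 :=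
    key_ineq hNpos hSpos hD0 hclose hNS_abs
  -- the vector u = S • w - N • wstar
  set u := S • w - N • wstar with hudef
  set U := enorm u with hUdef
  have hU0 : 0 ≤ U := enorm_nonneg _
  have hU2 : U ^ 2 = 2 * N ^ 2 * S ^ 2 - 2 * N * S * P := by
    have e := enorm_sq u
    rw [← hUdef] at e
    simp only [hudef, Pi.sub_apply, Pi.smul_apply, smul_eq_mul] at e
    rw [e]
    linear_combination (-(S ^ 2)) * hN2 + (-(N ^ 2)) * hS2 + 2 * N * S * hPc
  have hUle : U ≤ 2 * N * D :=
    le_of_sq_le_sq (by positivity) (U_sq_le hNpos hU2 hD2 hkey)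
  -- a - astar in terms of u
  have hdiff : a - astar = (ρ / (N * S)) • u := by
    rw [ha, hastar, hudef]
    funext j
    simp only [Pi.sub_apply, Pi.smul_apply, smul_eq_mul]
    field_simp
  set X := enorm (a - astar) with hXdef
  have hXU : X = ρ / (N * S) * U := by
    rw [hXdef, hdiff, enorm_smul, ← hUdef, abs_of_pos (by positivity)]
  have hXle : X ≤ 2 * ρ * D / S := by
    rw [hXU]
    calc ρ / (N * S) * U ≤ ρ / (N * S) * (2 * N * D) := by
          apply mul_le_mul_of_nonneg_left hUle (by positivity)
      _ = 2 * ρ * D / S := by field_simp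
  constructor
  · -- part (i)
    have h1 : mnorm Sig⁻¹ (a - astar) ≤ 2 * X := mnorm_inv_le hSig hlow _
    have h3 : 4 * ρ * D / S ≤ 32 * ρ * (md / ms) :=
      final_i hρpos hSpos hmspos hD0 hmd0 hDmd hmsS
    rw [hκ2]
    calc mnorm Sig⁻¹ (a - astar) ≤ 2 * X := h1
      _ ≤ 2 * (2 * ρ * D / S) := mul_le_mul_of_nonneg_left hXle (by norm_num)
      _ = 4 * ρ * D / S := by ring
      _ ≤ 32 * ρ * (md / ms) := h3
  · -- part (ii)
    have hVval : w ⬝ᵥ (a - astar) = ρ * N - ρ / S * P := by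
      rw [ha, hastar, dotProduct_sub, dotProduct_smul, dotProduct_smul, smul_eq_mul,
        smul_eq_mul, dot_self_eq w, ← hNdef, ← hPdef]
      field_simp
    set V := w ⬝ᵥ (a - astar) with hVdef
    have hVS : V * S = ρ * N * S - ρ * P := by
      rw [hVval]; field_simp <;> ring
    have habs : |V| ≤ 32 * ρ * md ^ 2 / ms :=
      final_ii hρpos hNpos hSpos hmspos hD0 hmd0 hVS hD2 hPle hDmd hmsS
    have hrw : 32 * ρ * ms * (md / ms) ^ 2 = 32 * ρ * md ^ 2 / ms := by
      field_simp
    rw [hκ2, hrw]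
    exact habs


end DiskCurvature
end
end
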